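/- arXiv:2209.05676 — 8 statements merged into one kernel-verified Lean document; each statement's English description precedes it below -/
import Mathlib

section
/- Let s be a binary sequence of length ℓ ≥ 1, let e_0 = 0^ℓ be the all-zeros sequence of length ℓ, and for i ∈ [ℓ] let e_i = 0^{i-1} 1 0^{ℓ-i}. Then s[i] = 1 if and only if d_L(s, e_0) - d_L(s, e_i) = 1, and s[i] = 0 if and only if d_L(s, e_0) - d_L(s, e_i) ≤ 0. -/
/-!
Every unit edit changes the number of `1`s by at most one, so
`count 1 x ≤ d_L(x, y) + count 1 y`, and equality holds exactly when `y` arises from `x` by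
deleting some `1`s and overwriting some others. For a binary `s` of length `ℓ` this gives
`d_L(s, 0^ℓ) = count 1 s`, and `d_L(s, e_i) = count 1 s - 1` when `s[i] = 1`. When `s[i] = 0`,
the lengths agree, so no `1` of `s` can be deleted and none lands on position `i`; equality
fails and `d_L(s, e_i) ≥ count 1 s`.
-/

namespace Levenshtein

/-- Costs of the edit operations (as in the former `Mathlib.Data.List.EditDistance.Defs`). -/
structure Cost (α β δ : Type*) where
  delete : α → δ
  insert : β → δ
  substitute : α → β → δ

/-- The default unit costs (as in the former Mathlib). -/
def defaultCost {α : Type*} [DecidableEq α] : Cost α α ℕ where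
  delete _ := 1
  insert _ := 1
  substitute a b := if a = b then 0 else 1

end Levenshtein

/-- The Levenshtein distance, by the recursion the former Mathlib `levenshtein` satisfies
(`levenshtein_nil_nil`, `levenshtein_nil_cons`, `levenshtein_cons_nil`, `levenshtein_cons_cons`). -/
def levenshtein {α β δ : Type*} [AddZeroClass δ] [Min δ] (C : Levenshtein.Cost α β δ) :
    List α → List β → δ
  | [], [] => 0
  | [], y :: ys => C.insert y + levenshtein C [] ys
  | x :: xs, [] => C.delete x + levenshtein C xs []
  | x :: xs, y :: ys =>
    min (C.delete x + levenshtein C xs (y :: ys))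
      (min (C.insert y + levenshtein C (x :: xs) ys) (C.substitute x y + levenshtein C xs ys))

/-- The Levenshtein edit distance with unit costs, over alphabet `ℕ`. -/
def editDist (x y : List ℕ) : ℕ := levenshtein Levenshtein.defaultCost x y

open List

lemma editDist_nil_left (y : List ℕ) : editDist [] y = y.length := by
  induction y with
  | nil => simp [editDist, levenshtein]
  | cons a l ih =>
    simp only [editDist, Levenshtein.defaultCost, levenshtein, length_cons] at ih ⊢
    omega

lemma editDist_nil_right (x : List ℕ) : editDist x [] = x.length := by
  induction x with
  | nil => simp [editDist, levenshtein]
  | cons a l ih =>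
    simp only [editDist, Levenshtein.defaultCost, levenshtein, length_cons] at ih ⊢
    omega

lemma editDist_cons_cons (a b : ℕ) (x y : List ℕ) :
    editDist (a :: x) (b :: y) =
      min (1 + editDist x (b :: y))
        (min (1 + editDist (a :: x) y) ((if a = b then 0 else 1) + editDist x y)) := by
  simp [editDist, levenshtein, Levenshtein.defaultCost]

lemma editDist_cons_left_le (a : ℕ) (x y : List ℕ) :
    editDist (a :: x) y ≤ 1 + editDist x y := by
  cases y with
  | nil => simp [editDist_nil_right]
  | cons b y => rw [editDist_cons_cons]; exact min_le_left _ _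

lemma editDist_cons_cons_le (a b : ℕ) (x y : List ℕ) :
    editDist (a :: x) (b :: y) ≤ (if a = b then 0 else 1) + editDist x y := by
  rw [editDist_cons_cons]
  exact (min_le_right _ _).trans (min_le_right _ _)

lemma count_one_le_editDist_add (x y : List ℕ) : x.count 1 ≤ editDist x y + y.count 1 := by
  induction x generalizing y with
  | nil => simp
  | cons a x ihx =>
    induction y with
    | nil => rw [editDist_nil_right, count_nil, add_zero]; exact count_le_length
    | cons b y ihy =>
      have := ihx (b :: y)
      have := ihx y
      rw [editDist_cons_cons, ← min_add_add_right, ← min_add_add_right]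
      simp only [le_min_iff, count_cons, beq_iff_eq] at *
      split_ifs at * <;> omega

inductive OnesErasure : List ℕ → List ℕ → Prop
  | nil : OnesErasure [] []
  | cons (a : ℕ) {x y : List ℕ} : OnesErasure x y → OnesErasure (a :: x) (a :: y)
  | delete {x y : List ℕ} : OnesErasure x y → OnesErasure (1 :: x) y
  | replace {b : ℕ} {x y : List ℕ} :
      b ≠ 1 → OnesErasure x y → OnesErasure (1 :: x) (b :: y)

namespace OnesErasure

lemma length_le {x y : List ℕ} (h : OnesErasure x y) : y.length ≤ x.length := by
  induction h <;> simp only [length_nil, length_cons] <;> omega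

lemma append {x y x' y' : List ℕ} (h : OnesErasure x y) (h' : OnesErasure x' y') :
    OnesErasure (x ++ x') (y ++ y') := by
  induction h with
  | nil => exact h'
  | cons a _ ih => exact .cons a ih
  | delete _ ih => exact .delete ih
  | replace hb _ ih => exact .replace hb ih

lemma getElem?_eq_one_of_length_eq {x y : List ℕ} (h : OnesErasure x y)
    (hlen : x.length = y.length) {k : ℕ} (hk : y[k]? = some 1) : x[k]? = some 1 := by
  induction h generalizing k with
  | nil => simp at hk
  | cons a _ ih =>
    cases k with
    | zero => simpa using hk
    | succ k => simpa using ih (by simpa using hlen) (by simpa using hk)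
  | delete h _ => have := h.length_le; simp only [length_cons] at hlen; omega
  | replace hb _ ih =>
    cases k with
    | zero => exact absurd (by simpa using hk) hb
    | succ k => simpa using ih (by simpa using hlen) (by simpa using hk)

lemma editDist_add_count_one {x y : List ℕ} (h : OnesErasure x y) :
    editDist x y + y.count 1 = x.count 1 := by
  refine le_antisymm ?_ (count_one_le_editDist_add x y)
  induction h with
  | nil => simp [editDist, levenshtein]
  | @cons a x y _ ih =>
    have := editDist_cons_cons_le a a x y
    simp only [count_cons, if_true] at this ⊢; omega
  | @delete x y _ ih =>
    have := editDist_cons_left_le 1 x y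
    simp only [count_cons, beq_self_eq_true, if_true] at this ⊢; omega
  | @replace b x y hb _ ih =>
    have := editDist_cons_cons_le 1 b x y
    simp only [count_cons, beq_iff_eq, hb, Ne.symm hb, if_true, if_false] at this ⊢; omega

end OnesErasure

lemma onesErasure_of_editDist_add_count_one {x y : List ℕ}
    (h : editDist x y + y.count 1 = x.count 1) : OnesErasure x y := by
  induction x generalizing y with
  | nil =>
    rw [editDist_nil_left, count_nil] at h
    obtain rfl : y = [] := eq_nil_of_length_eq_zero (by omega)
    exact .nil
  | cons a x ihx =>
    cases y with
    | nil =>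
      have := count_le_length (a := 1) (l := x)
      simp only [editDist_nil_right, count_nil, count_cons, beq_iff_eq, length_cons] at h
      split_ifs at h with ha
      · subst ha
        exact .delete (ihx (by rw [editDist_nil_right, count_nil]; omega))
      · omega
    | cons b y =>
      have := count_one_le_editDist_add x (b :: y)
      have := count_one_le_editDist_add (a :: x) y
      have := count_one_le_editDist_add x y
      rw [editDist_cons_cons] at h
      by_cases hdel : a = 1 ∧ editDist x (b :: y) + (b :: y).count 1 = x.count 1
      · obtain ⟨rfl, hx⟩ := hdel
        exact .delete (ihx hx)
      · have hsub : editDist x y + y.count 1 = x.count 1 := by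
          simp only [count_cons, beq_iff_eq] at *
          split_ifs at * <;> omega
        by_cases hab : a = b
        · subst hab; exact .cons a (ihx hsub)
        · obtain ⟨rfl, hb⟩ : a = 1 ∧ b ≠ 1 := by
            simp only [count_cons, beq_iff_eq, hab, if_false] at *
            split_ifs at * <;> omega
          exact .replace hb (ihx hsub)

theorem editDist_add_count_one_eq_iff (x y : List ℕ) :
    editDist x y + y.count 1 = x.count 1 ↔ OnesErasure x y :=
  ⟨onesErasure_of_editDist_add_count_one, OnesErasure.editDist_add_count_one⟩

lemma onesErasure_replicate_zero {s : List ℕ} (hbin : ∀ c ∈ s, c = 0 ∨ c = 1) :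
    OnesErasure s (replicate s.length 0) := by
  induction s with
  | nil => exact .nil
  | cons c s ih =>
    have hs := ih fun c hc => hbin c (mem_cons_of_mem _ hc)
    rcases hbin c mem_cons_self with rfl | rfl
    · exact .cons 0 hs
    · exact .replace zero_ne_one hs

lemma editDist_replicate_zero {s : List ℕ} (hbin : ∀ c ∈ s, c = 0 ∨ c = 1) :
    editDist s (replicate s.length 0) = s.count 1 := by
  simpa [count_replicate] using (onesErasure_replicate_zero hbin).editDist_add_count_one

lemma editDist_replicate_append_one_cons_replicate {u v : List ℕ}
    (hu : ∀ c ∈ u, c = 0 ∨ c = 1) (hv : ∀ c ∈ v, c = 0 ∨ c = 1) :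
    editDist (u ++ 1 :: v) (replicate u.length 0 ++ 1 :: replicate v.length 0) + 1 =
      (u ++ 1 :: v).count 1 := by
  have := ((onesErasure_replicate_zero hu).append
    ((onesErasure_replicate_zero hv).cons 1)).editDist_add_count_one
  simpa [count_append, count_replicate, add_assoc] using this

lemma count_one_le_editDist_replicate_append_one_cons_replicate (u v : List ℕ) :
    (u ++ 0 :: v).count 1 ≤
      editDist (u ++ 0 :: v) (replicate u.length 0 ++ 1 :: replicate v.length 0) := by
  have hne : ¬ OnesErasure (u ++ 0 :: v) (replicate u.length 0 ++ 1 :: replicate v.length 0) :=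
    fun h => by simpa using h.getElem?_eq_one_of_length_eq (by simp) (k := u.length) (by simp)
  have := count_one_le_editDist_add (u ++ 0 :: v)
    (replicate u.length 0 ++ 1 :: replicate v.length 0)
  rw [← editDist_add_count_one_eq_iff] at hne
  simp only [count_append, count_cons, count_replicate, beq_iff_eq, zero_ne_one, ↓reduceIte]
    at this hne ⊢
  omega

theorem edit_unit_vector_queries_recover_characters_general
    (ℓ : ℕ) (s : List ℕ) (hlen : s.length = ℓ)
    (hbin : ∀ c ∈ s, c = 0 ∨ c = 1)
    (i : ℕ) (hi1 : 1 ≤ i) (hiℓ : i ≤ ℓ) :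
    let e0 : List ℕ := List.replicate ℓ 0
    let ei : List ℕ := List.replicate (i - 1) 0 ++ [1] ++ List.replicate (ℓ - i) 0
    (s.getD (i - 1) 0 = 1 ↔
      (editDist s e0 : ℤ) - (editDist s ei : ℤ) = 1) ∧
    (s.getD (i - 1) 0 = 0 ↔
      (editDist s e0 : ℤ) - (editDist s ei : ℤ) ≤ 0) := by
  intro e0 ei
  obtain ⟨u, c, v, rfl, hu, hv⟩ :
      ∃ u c v, s = u ++ c :: v ∧ u.length = i - 1 ∧ v.length = ℓ - i := by
    have hk : i - 1 < s.length := by omega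
    refine ⟨s.take (i - 1), s[i - 1], s.drop i, ?_, by simp; omega, by simp; omega⟩
    have hcons := getElem_cons_drop hk
    rw [Nat.sub_add_cancel hi1] at hcons
    rw [hcons, take_append_drop]
  have hei : ei = replicate u.length 0 ++ 1 :: replicate v.length 0 := by simp [ei, hu, hv]
  subst hlen
  have he0 : editDist (u ++ c :: v) e0 = (u ++ c :: v).count 1 := editDist_replicate_zero hbin
  have hc : (u ++ c :: v).getD (i - 1) 0 = c := by simp [← hu]
  rw [hei, he0, hc]
  rcases hbin c (by simp) with rfl | rfl
  · have := count_one_le_editDist_replicate_append_one_cons_replicate u v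
    simp only [zero_ne_one, false_iff, true_iff]
    omega
  · have := editDist_replicate_append_one_cons_replicate (u := u) (v := v)
      (fun c hc => hbin c (by simp [hc])) (fun c hc => hbin c (by simp [hc]))
    simp only [one_ne_zero, false_iff, true_iff]
    omega

/-- For a binary sequence `s` of length `ℓ ≥ 1`, with `e₀ = 0^ℓ` and
`e i = 0^(i-1) 1 0^(ℓ-i)` for `i ∈ [ℓ]` (1-indexed), the i-th character of `s` is `1`
iff `d_L(s,e₀) - d_L(s,e i) = 1`, and it is `0` iff `d_L(s,e₀) - d_L(s,e i) ≤ 0`. -/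
theorem edit_unit_vector_queries_recover_characters
    (ℓ : ℕ) (hℓ : 1 ≤ ℓ) (s : List ℕ) (hlen : s.length = ℓ)
    (hbin : ∀ c ∈ s, c = 0 ∨ c = 1)
    (i : ℕ) (hi1 : 1 ≤ i) (hiℓ : i ≤ ℓ) :
    let e0 : List ℕ := List.replicate ℓ 0
    let ei : List ℕ := List.replicate (i - 1) 0 ++ [1] ++ List.replicate (ℓ - i) 0
    (s.getD (i - 1) 0 = 1 ↔
      (editDist s e0 : ℤ) - (editDist s ei : ℤ) = 1) ∧
    (s.getD (i - 1) 0 = 0 ↔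
      (editDist s e0 : ℤ) - (editDist s ei : ℤ) ≤ 0) :=
  edit_unit_vector_queries_recover_characters_general ℓ s hlen hbin i hi1 hiℓ
end

section
/- For the DTW distance over the reals with ℓ1 cost, for any nonempty sequence r with r ≠ (0) (the single-character sequence 0), the DTW distance from the one-character sequence (1) to r equals the DTW distance from the two-character sequence (1,1) to r. -/
/-- `IsExpansion x x'` : `x'` is obtained from `x` by duplicating each character an
arbitrary positive number of times. -/
def IsExpansion (x x' : List ℝ) : Prop :=
  ∃ ks : List ℕ, ks.length = x.length ∧ (∀ k ∈ ks, 0 < k) ∧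
    x' = (List.zipWith (fun k (a : ℝ) => List.replicate k a) ks x).flatten

/-- The dynamic time warping distance with `ℓ₁` character cost `|a - b|`:
the minimum over all pairs of equal-length expansions of the `ℓ₁` distance. -/
noncomputable def dtw (x y : List ℝ) : ℝ :=
  sInf { c | ∃ x' y', IsExpansion x x' ∧ IsExpansion y y' ∧ x'.length = y'.length ∧
    c = (List.zipWith (fun a b => |a - b|) x' y').sum }

/-!
An expansion of `(a)` is a constant run `a, …, a` of some length `k ≥ 1`, and an expansion of
`(a, a)` is the same run with `k ≥ 2`, so the two cost sets defining the distances can only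
differ through correspondences with `k = 1`. Such a correspondence forces `r = (b)`, and when
`b = a` its cost `0` is also the cost of the correspondence `(a, a) ~ (a, a)`.
-/

open List

lemma length_flatten_zipWith_replicate (ks : List ℕ) (x : List ℝ) (h : ks.length = x.length) :
    (zipWith (fun k (a : ℝ) => replicate k a) ks x).flatten.length = ks.sum := by
  induction ks generalizing x with
  | nil => simp
  | cons k ks ih =>
    cases x with
    | nil => simp at h
    | cons a x => simp [ih x (by simpa using h)]

lemma IsExpansion.length_le {x x' : List ℝ} (h : IsExpansion x x') :
    x.length ≤ x'.length := by
  obtain ⟨ks, hlen, hpos, rfl⟩ := h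
  rw [length_flatten_zipWith_replicate ks x hlen, ← hlen]
  exact length_le_sum_of_one_le ks hpos

lemma isExpansion_singleton_iff {a : ℝ} {x' : List ℝ} :
    IsExpansion [a] x' ↔ ∃ k, 0 < k ∧ x' = replicate k a := by
  constructor
  · rintro ⟨ks, hlen, hpos, rfl⟩
    match ks, hlen with
    | [k], _ => exact ⟨k, hpos k (mem_singleton_self k), by simp⟩
  · rintro ⟨k, hk, rfl⟩
    exact ⟨[k], rfl, by simpa using hk, by simp⟩

lemma isExpansion_pair_self_iff {a : ℝ} {x' : List ℝ} :
    IsExpansion [a, a] x' ↔ IsExpansion [a] x' ∧ 2 ≤ x'.length := by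
  rw [isExpansion_singleton_iff]
  constructor
  · rintro ⟨ks, hlen, hpos, rfl⟩
    match ks, hlen with
    | [k₁, k₂], _ =>
      have h₁ := hpos k₁ (by simp)
      have h₂ := hpos k₂ (by simp)
      refine ⟨⟨k₁ + k₂, by omega, by simp⟩, ?_⟩
      rw [length_flatten_zipWith_replicate _ _ rfl, sum_cons, sum_cons, sum_nil]
      omega
  · rintro ⟨⟨k, -, rfl⟩, hk⟩
    obtain ⟨k, rfl⟩ : ∃ m, k = m + 2 := ⟨k - 2, by rw [length_replicate] at hk; omega⟩
    refine ⟨[1, k + 1], rfl, by simp, ?_⟩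
    simp [replicate_succ]

lemma eq_of_isExpansion_singleton {r : List ℝ} {b : ℝ} (h : IsExpansion r [b]) : r = [b] := by
  match r, h.length_le with
  | [], _ =>
    obtain ⟨ks, hlen, -, h⟩ := h
    simp [length_eq_zero_iff.mp hlen] at h
  | [c], _ =>
    obtain ⟨k, -, hk⟩ := isExpansion_singleton_iff.mp h
    rw [(eq_replicate_iff.mp hk).2 b (mem_singleton_self b)]

theorem dtw_singleton_eq_dtw_pair_self (a : ℝ) (r : List ℝ) (hr : ∀ b, r = [b] → b = a) :
    dtw [a] r = dtw [a, a] r := by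
  unfold dtw
  congr 1
  ext c
  constructor
  · rintro ⟨x', y', hx, hy, hlen, rfl⟩
    by_cases hx₂ : 2 ≤ x'.length
    · exact ⟨x', y', isExpansion_pair_self_iff.mpr ⟨hx, hx₂⟩, hy, hlen, rfl⟩
    obtain ⟨k, hk, rfl⟩ := isExpansion_singleton_iff.mp hx
    obtain rfl : k = 1 := by simp only [length_replicate, not_le] at hx₂; omega
    obtain ⟨b, rfl⟩ := length_eq_one_iff.mp (hlen.symm.trans (length_replicate ..))
    obtain rfl := eq_of_isExpansion_singleton hy
    obtain rfl := (hr b rfl).symm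
    have hpair : IsExpansion [a] [a, a] := isExpansion_singleton_iff.mpr ⟨2, two_pos, rfl⟩
    exact ⟨[a, a], [a, a], isExpansion_pair_self_iff.mpr ⟨hpair, le_rfl⟩, hpair, rfl, by simp⟩
  · rintro ⟨x', y', hx, hy, hlen, rfl⟩
    exact ⟨x', y', (isExpansion_pair_self_iff.mp hx).1, hy, hlen, rfl⟩

theorem dtw_one_eq_dtw_one_one_general
    (r : List ℝ) (hbin : ∀ c ∈ r, c = 0 ∨ c = 1)
    (hr0 : r ≠ [(0 : ℝ)]) :
    dtw [(1 : ℝ)] r = dtw [(1 : ℝ), 1] r := by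
  refine dtw_singleton_eq_dtw_pair_self 1 r fun b hb => ?_
  subst hb
  rcases hbin b (mem_singleton_self b) with rfl | rfl
  · exact absurd rfl hr0
  · rfl

/-- For any nonempty binary sequence `r` with `r ≠ (0)` (the single-character
sequence `0`), the DTW distance from `(1)` to `r` equals the DTW distance from `(1,1)`
to `r`. -/
theorem dtw_one_eq_dtw_one_one
    (r : List ℝ) (hne : r ≠ []) (hbin : ∀ c ∈ r, c = 0 ∨ c = 1)
    (hr0 : r ≠ [(0 : ℝ)]) :
    dtw [(1 : ℝ)] r = dtw [(1 : ℝ), 1] r :=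
  dtw_one_eq_dtw_one_one_general r hbin hr0
end

section
/- Let MSS(seq, r) denote the minimum, over all ways of selecting r entries from the integer sequence seq with no two selected entries adjacent, of the sum of the selected entries. Let seq1 = (3,…,3 [a copies], 1, 3, 3, 3,…,3 [b copies]) and seq2 = (3,…,3 [a copies], 2, 3, 2, 3,…,3 [b copies]). Then MSS(seq1, 1) = 1 ≠ 2 = MSS(seq2, 1), and for every x with 2 ≤ x ≤ (a+b+4)/2, MSS(seq1, x) = MSS(seq2, x). -/
/-!
Both sequences are constantly 3 except at position `a` (and `a + 2`), so a separated selection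
`S` costs `3|S| - 2[a ∈ S]` in `seq₁` and `3|S| - [a ∈ S] - [a + 2 ∈ S]` in `seq₂`. A separated
subset of `{0, …, a + b + 2}` through `a` or through `a + 2` has at most `2 + ⌊a/2⌋ + ⌊b/2⌋`
elements, and every size `2 ≤ x` below this bound is realised by a progression of step 2 through
both `a` and `a + 2`. Hence for `x ≥ 2` both minima are `3x - 2` below the bound and `3x` above
it, whereas a single selected entry can only pick up one of the two discounts of `seq₂`.
-/

/-- `MSS seq r`: the minimum, over all ways of selecting `r` entries of `seq` with no two
selected entries adjacent, of the sum of the selected entries (0-indexed positions). -/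
noncomputable def MSS (seq : List ℕ) (r : ℕ) : ℕ :=
  sInf { t | ∃ S : Finset ℕ, (∀ i ∈ S, i < seq.length) ∧ S.card = r ∧
    (∀ i ∈ S, i + 1 ∉ S) ∧ t = ∑ i ∈ S, seq.getD i 0 }

open Finset

def Separated (S : Finset ℕ) : Prop :=
  ∀ i ∈ S, i + 1 ∉ S

lemma Separated.mono {S T : Finset ℕ} (hS : Separated S) (hTS : T ⊆ S) : Separated T :=
  fun i hi hi' => hS i (hTS hi) (hTS hi')

lemma Separated.card_le_of_subset_Ico {S : Finset ℕ} (hS : Separated S) {lo hi : ℕ}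
    (h : S ⊆ Ico lo hi) : #S ≤ (hi - lo + 1) / 2 := by
  have hmaps : Set.MapsTo (fun i => (i - lo) / 2) S (range ((hi - lo + 1) / 2)) := by
    intro i hi'
    have := mem_Ico.mp (h hi')
    simp only [coe_range, Set.mem_Iio]
    omega
  have hinj : Set.InjOn (fun i => (i - lo) / 2) S := by
    intro i hi' j hj hij
    have := mem_Ico.mp (h hi')
    have := mem_Ico.mp (h hj)
    simp only at hij
    rcases lt_trichotomy i j with hlt | heq | hgt
    · exact absurd (show j = i + 1 by omega) fun e => hS i hi' (e ▸ hj)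
    · exact heq
    · exact absurd (show i = j + 1 by omega) fun e => hS j hj (e ▸ hi')
  simpa using card_le_card_of_injOn _ hmaps hinj

lemma Separated.card_le_of_mem {S : Finset ℕ} (hS : Separated S) {N v : ℕ}
    (hN : ∀ i ∈ S, i < N) (hv : v ∈ S) : #S ≤ v / 2 + (N - v + 1) / 2 := by
  have hleft := (hS.mono (filter_subset (· < v) S)).card_le_of_subset_Ico (lo := 0) (hi := v - 1)
    fun i hi => by
      obtain ⟨hiS, hiv⟩ := mem_filter.mp hi
      have : i + 1 ≠ v := fun e => hS i hiS (e ▸ hv)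
      rw [mem_Ico]
      omega
  have hright := (hS.mono (filter_subset (¬· < v) S)).card_le_of_subset_Ico (lo := v) (hi := N)
    fun i hi => by
      obtain ⟨hiS, hiv⟩ := mem_filter.mp hi
      have := hN i hiS
      rw [mem_Ico]
      omega
  have := card_filter_add_card_filter_not (s := S) fun i => i < v
  omega

def stepTwo (s x : ℕ) : Finset ℕ :=
  (List.range' s x 2).toFinset

lemma mem_stepTwo {s x i : ℕ} : i ∈ stepTwo s x ↔ ∃ j < x, i = s + 2 * j := by
  simp [stepTwo, List.mem_range']

lemma card_stepTwo (s x : ℕ) : #(stepTwo s x) = x := by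
  rw [stepTwo, List.toFinset_card_of_nodup (List.nodup_range' 2), List.length_range']

lemma separated_stepTwo (s x : ℕ) : Separated (stepTwo s x) := by
  intro i hi hi'
  obtain ⟨j, -, rfl⟩ := mem_stepTwo.mp hi
  obtain ⟨k, -, hk⟩ := mem_stepTwo.mp hi'
  omega

lemma MSS_eq_of_exists_of_forall_le {seq : List ℕ} {r t : ℕ}
    (hex : ∃ S : Finset ℕ, (∀ i ∈ S, i < seq.length) ∧ #S = r ∧ Separated S ∧
      ∑ i ∈ S, seq.getD i 0 = t)
    (hle : ∀ S : Finset ℕ, (∀ i ∈ S, i < seq.length) → #S = r → Separated S →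
      t ≤ ∑ i ∈ S, seq.getD i 0) :
    MSS seq r = t := by
  obtain ⟨S, hN, hcard, hsep, hsum⟩ := hex
  refine IsLeast.csInf_eq ⟨⟨S, hN, hcard, hsep, hsum.symm⟩, ?_⟩
  rintro _ ⟨T, hTN, hTcard, hTsep, rfl⟩
  exact hle T hTN hTcard hTsep

def seq₁ (a b : ℕ) : List ℕ :=
  List.replicate a 3 ++ 1 :: 3 :: 3 :: List.replicate b 3

def seq₂ (a b : ℕ) : List ℕ :=
  List.replicate a 3 ++ 2 :: 3 :: 2 :: List.replicate b 3

section Sequences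

variable {a b : ℕ}

lemma length_seq₁ : (seq₁ a b).length = a + b + 3 := by
  simp [seq₁]
  omega

lemma length_seq₂ : (seq₂ a b).length = a + b + 3 := by
  simp [seq₂]
  omega

lemma getD_seq₁ {i : ℕ} (hi : i < a + b + 3) :
    (seq₁ a b).getD i 0 = if i = a then 1 else 3 := by
  simp only [seq₁, List.getD_eq_getElem?_getD, List.getElem?_append, List.getElem?_cons,
    List.getElem?_replicate, List.length_replicate]
  split_ifs <;> first | omega | simp

lemma getD_seq₂ {i : ℕ} (hi : i < a + b + 3) :
    (seq₂ a b).getD i 0 = if i = a then 2 else if i = a + 2 then 2 else 3 := by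
  simp only [seq₂, List.getD_eq_getElem?_getD, List.getElem?_append, List.getElem?_cons,
    List.getElem?_replicate, List.length_replicate]
  split_ifs <;> first | omega | simp

lemma sum_getD_seq₁ {S : Finset ℕ} (hS : ∀ i ∈ S, i < a + b + 3) :
    ∑ i ∈ S, (seq₁ a b).getD i 0 + (if a ∈ S then 2 else 0) = 3 * #S := by
  have hpointwise : ∀ i ∈ S, (seq₁ a b).getD i 0 + (if i = a then 2 else 0) = 3 := fun i hi => by
    rw [getD_seq₁ (hS i hi)]
    split_ifs <;> rfl
  rw [← sum_ite_eq' S a fun _ => 2, ← sum_add_distrib, sum_congr rfl hpointwise, sum_const,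
    smul_eq_mul, mul_comm]

lemma sum_getD_seq₂ {S : Finset ℕ} (hS : ∀ i ∈ S, i < a + b + 3) :
    ∑ i ∈ S, (seq₂ a b).getD i 0 + ((if a ∈ S then 1 else 0) + (if a + 2 ∈ S then 1 else 0)) =
      3 * #S := by
  have hpointwise : ∀ i ∈ S, (seq₂ a b).getD i 0 +
      ((if i = a then 1 else 0) + (if i = a + 2 then 1 else 0)) = 3 := fun i hi => by
    rw [getD_seq₂ (hS i hi)]
    split_ifs <;> omega
  rw [← sum_ite_eq' S a fun _ => 1, ← sum_ite_eq' S (a + 2) fun _ => 1, ← sum_add_distrib,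
    ← sum_add_distrib, sum_congr rfl hpointwise, sum_const, smul_eq_mul, mul_comm]

lemma exists_separated_mem_of_le {x : ℕ} (hx : 1 ≤ x) (hxT : x ≤ 2 + a / 2 + b / 2) :
    ∃ S : Finset ℕ, (∀ i ∈ S, i < a + b + 3) ∧ #S = x ∧ Separated S ∧
      a ∈ S ∧ (2 ≤ x → a + 2 ∈ S) := by
  -- the progression has `p` entries before `a` and `q` after it, with `q` as large as fits
  obtain ⟨p, q, hpq, hp, hq, hq1⟩ :
      ∃ p q : ℕ, x = 1 + p + q ∧ 2 * p ≤ a ∧ 2 * q ≤ b + 2 ∧ (2 ≤ x → 1 ≤ q) :=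
    ⟨x - 1 - min (x - 1) (b / 2 + 1), min (x - 1) (b / 2 + 1), by omega, by omega, by omega,
      by omega⟩
  refine ⟨stepTwo (a - 2 * p) x, fun i hi => ?_, card_stepTwo _ _, separated_stepTwo _ _,
    mem_stepTwo.mpr ⟨p, by omega, by omega⟩,
    fun hx2 => mem_stepTwo.mpr ⟨p + 1, by omega, by omega⟩⟩
  obtain ⟨j, hj, rfl⟩ := mem_stepTwo.mp hi
  omega

lemma exists_separated_card_eq {x : ℕ} (hx : 2 * x ≤ a + b + 4) :
    ∃ S : Finset ℕ, (∀ i ∈ S, i < a + b + 3) ∧ #S = x ∧ Separated S :=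
  ⟨stepTwo 0 x, fun i hi => by obtain ⟨j, hj, rfl⟩ := mem_stepTwo.mp hi; omega,
    card_stepTwo _ _, separated_stepTwo _ _⟩

lemma MSS_seq₁ {x : ℕ} (hx : 1 ≤ x) (hxN : 2 * x ≤ a + b + 4) :
    MSS (seq₁ a b) x = if x ≤ 2 + a / 2 + b / 2 then 3 * x - 2 else 3 * x := by
  apply MSS_eq_of_exists_of_forall_le <;> simp only [length_seq₁]
  · split_ifs with hxT
    · obtain ⟨S, hN, hcard, hsep, ha, -⟩ := exists_separated_mem_of_le hx hxT
      have := sum_getD_seq₁ hN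
      exact ⟨S, hN, hcard, hsep, by simp only [ha, if_true] at this; omega⟩
    · obtain ⟨S, hN, hcard, hsep⟩ := exists_separated_card_eq hxN
      have ha : a ∉ S := fun ha => hxT (by have := hsep.card_le_of_mem hN ha; omega)
      have := sum_getD_seq₁ hN
      exact ⟨S, hN, hcard, hsep, by simp only [ha, if_false] at this; omega⟩
  · intro S hN hcard hsep
    have := sum_getD_seq₁ hN
    by_cases ha : a ∈ S
    · have := hsep.card_le_of_mem hN ha
      split_ifs at * <;> omega
    split_ifs at * <;> omega

lemma MSS_seq₂ {x : ℕ} (hx : 2 ≤ x) (hxN : 2 * x ≤ a + b + 4) :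
    MSS (seq₂ a b) x = if x ≤ 2 + a / 2 + b / 2 then 3 * x - 2 else 3 * x := by
  apply MSS_eq_of_exists_of_forall_le <;> simp only [length_seq₂]
  · split_ifs with hxT
    · obtain ⟨S, hN, hcard, hsep, ha, ha₂⟩ := exists_separated_mem_of_le (by omega) hxT
      have := sum_getD_seq₂ hN
      exact ⟨S, hN, hcard, hsep, by simp only [ha, ha₂ hx, if_true] at this; omega⟩
    · obtain ⟨S, hN, hcard, hsep⟩ := exists_separated_card_eq hxN
      have ha : a ∉ S := fun ha => hxT (by have := hsep.card_le_of_mem hN ha; omega)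
      have ha₂ : a + 2 ∉ S := fun ha₂ => hxT (by have := hsep.card_le_of_mem hN ha₂; omega)
      have := sum_getD_seq₂ hN
      exact ⟨S, hN, hcard, hsep, by simp only [ha, ha₂, if_false] at this; omega⟩
  · intro S hN hcard hsep
    have := sum_getD_seq₂ hN
    by_cases ha : a ∈ S
    · have := hsep.card_le_of_mem hN ha
      split_ifs at * <;> omega
    by_cases ha₂ : a + 2 ∈ S
    · have := hsep.card_le_of_mem hN ha₂
      split_ifs at * <;> omega
    split_ifs at * <;> omega

lemma MSS_seq₂_one : MSS (seq₂ a b) 1 = 2 := by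
  apply MSS_eq_of_exists_of_forall_le <;> simp only [length_seq₂]
  · refine ⟨{a}, by simp; omega, card_singleton a, by simp [Separated], ?_⟩
    rw [sum_singleton, getD_seq₂ (by omega), if_pos rfl]
  · intro S hN hcard _
    obtain ⟨c, rfl⟩ := card_eq_one.mp hcard
    have := sum_getD_seq₂ hN
    simp only [mem_singleton, card_singleton] at this
    split_ifs at this <;> omega

end Sequences

/-- For `seq1 = (3^a, 1, 3, 3, 3^b)` and `seq2 = (3^a, 2, 3, 2, 3^b)`,
we have `MSS(seq1,1) = 1 ≠ 2 = MSS(seq2,1)`, while for every `2 ≤ x ≤ (a+b+4)/2`,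
`MSS(seq1,x) = MSS(seq2,x)`. -/
theorem mss_pair_distinguishable_only_at_one (a b : ℕ) :
    let seq1 : List ℕ := List.replicate a 3 ++ 1 :: 3 :: 3 :: List.replicate b 3
    let seq2 : List ℕ := List.replicate a 3 ++ 2 :: 3 :: 2 :: List.replicate b 3
    MSS seq1 1 = 1 ∧ MSS seq2 1 = 2 ∧
      ∀ x : ℕ, 2 ≤ x → x ≤ (a + b + 4) / 2 → MSS seq1 x = MSS seq2 x := by
  refine ⟨?_, MSS_seq₂_one, fun x hx hxN => ?_⟩
  · rw [← seq₁, MSS_seq₁ le_rfl (by omega), if_pos (by omega)]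
  · rw [← seq₁, ← seq₂, MSS_seq₁ (by omega) (by omega), MSS_seq₂ hx (by omega)]
end

section
/- For nonnegative integers a and b, let seq = (3,…,3, 1, 3, 3, 3,…,3) be the sequence with a leading 3's and b trailing 3's. Then for any integer x with 2 ≤ x < (a+b+4)/2, MSS(seq, x) = 3x - 2. -/
/-- For `seq = (3^a, 1, 3, 3, 3^b)` and any integer `x` with
`2 ≤ x < (a+b+4)/2`, the min 1-separated sum is `MSS(seq, x) = 3x - 2`. -/
theorem mss_three_one_three_value (a b : ℕ) (x : ℕ)
    (hx2 : 2 ≤ x) (hxub : 2 * x < a + b + 4) :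
    MSS (List.replicate a 3 ++ 1 :: 3 :: 3 :: List.replicate b 3) x = 3 * x - 2 := by
  set seq := List.replicate a 3 ++ 1 :: 3 :: 3 :: List.replicate b 3 with hseq
  have hlen : seq.length = a + b + 3 := by simp [hseq]; omega
  have hget : ∀ i, i < a + b + 3 → seq.getD i 0 = if i = a then 1 else 3 := by
    intro i hi
    rcases lt_trichotomy i a with h | h | h
    · rw [if_neg (by omega), hseq, List.getD_append _ _ _ _ (by simpa using h)]
      simp [List.getD_eq_getElem?_getD, h]
    · subst h
      rw [if_pos rfl, hseq, List.getD_append_right _ _ _ _ (by simp)]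
      simp
    · rw [if_neg (by omega), hseq, List.getD_append_right _ _ _ _ (by simp; omega)]
      simp only [List.length_replicate]
      rcases Nat.lt_or_ge (i - a) 3 with h3 | h3
      · have : i - a = 1 ∨ i - a = 2 := by omega
        rcases this with h' | h' <;> rw [h'] <;> rfl
      · have hb : i - a - 3 < b := by omega
        rw [(Nat.sub_add_cancel h3).symm, show i - a - 3 + 3 = (i - a - 3) + 1 + 1 + 1 from rfl,
          List.getD_cons_succ, List.getD_cons_succ, List.getD_cons_succ]
        simp [List.getD_eq_getElem?_getD, hb]
  -- the witness set
  set k := min (x - 1) (a / 2) with hk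
  have hk1 : 2 * k ≤ a := by omega
  have hk2 : k ≤ x - 1 := by omega
  set f : ℕ → ℕ := fun i => if i ≤ k then a - 2 * i else a + 2 * (i - k) with hf
  set S : Finset ℕ := (Finset.range x).image f with hS
  have hbound : ∀ i ∈ S, i < seq.length := by
    intro i hi
    rw [hS] at hi
    simp only [Finset.mem_image, Finset.mem_range] at hi
    obtain ⟨j, hj, rfl⟩ := hi
    rw [hlen, hf]
    simp only
    split_ifs <;> omega
  have hinj : Set.InjOn f (Finset.range x) := by
    intro i hi j hj hij
    simp only [Finset.coe_range, Set.mem_Iio] at hi hj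
    rw [hf] at hij
    simp only at hij
    split_ifs at hij <;> omega
  have hcard : S.card = x := by
    rw [hS, Finset.card_image_of_injOn hinj, Finset.card_range]
  have hadj : ∀ i ∈ S, i + 1 ∉ S := by
    intro i hi hi1
    rw [hS] at hi hi1
    simp only [Finset.mem_image, Finset.mem_range] at hi hi1
    obtain ⟨p, hp, hfp⟩ := hi
    obtain ⟨q, hq, hfq⟩ := hi1
    rw [hf] at hfp hfq
    simp only at hfp hfq
    split_ifs at hfp hfq <;> omega
  have haS : a ∈ S := by
    rw [hS]
    simp only [Finset.mem_image, Finset.mem_range]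
    exact ⟨0, by omega, by rw [hf]; simp⟩
  have hsum : ∑ i ∈ S, seq.getD i 0 = 3 * x - 2 := by
    have h1 : ∑ i ∈ S, seq.getD i 0 = ∑ i ∈ S, (if i = a then 1 else 3) := by
      refine Finset.sum_congr rfl fun i hi => ?_
      rw [hget i (by rw [← hlen]; exact hbound i hi)]
    rw [h1, ← Finset.add_sum_erase S _ haS, if_pos rfl]
    have h2 : ∑ i ∈ S.erase a, (if i = a then 1 else 3) = ∑ i ∈ S.erase a, 3 := by
      refine Finset.sum_congr rfl fun i hi => ?_
      rw [if_neg (Finset.ne_of_mem_erase hi)]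
    rw [h2, Finset.sum_const, Finset.card_erase_of_mem haS, hcard, smul_eq_mul]
    omega
  -- now compute sInf
  have hmem : 3 * x - 2 ∈ { t | ∃ S : Finset ℕ, (∀ i ∈ S, i < seq.length) ∧ S.card = x ∧
      (∀ i ∈ S, i + 1 ∉ S) ∧ t = ∑ i ∈ S, seq.getD i 0 } :=
    ⟨S, hbound, hcard, hadj, hsum.symm⟩
  have hlb : ∀ t ∈ { t | ∃ S : Finset ℕ, (∀ i ∈ S, i < seq.length) ∧ S.card = x ∧
      (∀ i ∈ S, i + 1 ∉ S) ∧ t = ∑ i ∈ S, seq.getD i 0 }, 3 * x - 2 ≤ t := by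
    rintro t ⟨T, hTb, hTc, -, rfl⟩
    have h1 : ∑ i ∈ T, seq.getD i 0 = ∑ i ∈ T, (if i = a then 1 else 3) := by
      refine Finset.sum_congr rfl fun i hi => ?_
      rw [hget i (by rw [← hlen]; exact hTb i hi)]
    rw [h1]
    by_cases haT : a ∈ T
    · rw [← Finset.add_sum_erase T _ haT, if_pos rfl]
      have h2 : ∑ i ∈ T.erase a, (if i = a then 1 else 3) = ∑ i ∈ T.erase a, 3 := by
        refine Finset.sum_congr rfl fun i hi => ?_
        rw [if_neg (Finset.ne_of_mem_erase hi)]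
      rw [h2, Finset.sum_const, Finset.card_erase_of_mem haT, hTc, smul_eq_mul]
      omega
    · have h2 : ∑ i ∈ T, (if i = a then 1 else 3) = ∑ i ∈ T, 3 := by
        refine Finset.sum_congr rfl fun i hi => ?_
        rw [if_neg (by rintro rfl; exact haT hi)]
      rw [h2, Finset.sum_const, hTc, smul_eq_mul]
      omega
  exact le_antisymm (Nat.sInf_le hmem) (le_csInf ⟨_, hmem⟩ hlb)
end

section
/- In any matching M between two sequences (with monotone non-crossing edges, full coverage, and endpoints matched), if an edge e of M joins two positions that both have degree greater than 1 in M, then M minus e is still a valid matching, and hence a minimum-cost matching contains no edge both of whose endpoints have degree greater than 1. -/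
/-- `IsMatching n ℓ M`: `M` is a (DTW-style) matching between positions `0,…,n-1` of a
query and positions `0,…,ℓ-1` of an input: every position is covered, the first positions
are matched to each other and the last positions are matched to each other, and edges are
monotone non-crossing. -/
def IsMatching (n ℓ : ℕ) (M : Finset (ℕ × ℕ)) : Prop :=
  (∀ e ∈ M, e.1 < n ∧ e.2 < ℓ) ∧
  (∀ i, i < n → ∃ j, (i, j) ∈ M) ∧
  (∀ j, j < ℓ → ∃ i, (i, j) ∈ M) ∧
  (0, 0) ∈ M ∧ (n - 1, ℓ - 1) ∈ M ∧
  (∀ e ∈ M, ∀ f ∈ M, (f.1 < e.1 → f.2 ≤ e.2) ∧ (f.2 < e.2 → f.1 ≤ e.1))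

/-- The cost of a matching: the sum over edges `(i,j)` of `|q[i] - s[j]|`. -/
noncomputable def matchCost (q s : List ℝ) (M : Finset (ℕ × ℕ)) : ℝ :=
  ∑ e ∈ M, |q.getD e.1 0 - s.getD e.2 0|

/-- The degree of query position `i` in `M`. -/
def degQ (M : Finset (ℕ × ℕ)) (i : ℕ) : ℕ := (M.filter (fun e => e.1 = i)).card

/-- The degree of input position `j` in `M`. -/
def degS (M : Finset (ℕ × ℕ)) (j : ℕ) : ℕ := (M.filter (fun e => e.2 = j)).card

/-- The cost of a matching with respect to an arbitrary nonnegative edge-weight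
function `w`. -/
noncomputable def wCost (w : ℕ × ℕ → ℝ) (M : Finset (ℕ × ℕ)) : ℝ := ∑ e ∈ M, w e

/-!
Let `e` be an edge whose query endpoint carries a second edge `f` and whose input endpoint
carries a second edge `g`. Deleting `e` keeps every position covered (by `f` or `g`) and
cannot break monotonicity. It also keeps both corner edges: if `e` were `(0, 0)`, then
`f = (0, b)` and `g = (a, 0)` with `a, b > 0` would cross, and symmetrically at
`(n - 1, ℓ - 1)`. Removing an edge of positive cost strictly lowers the cost, so a
minimum-cost matching has no such edge.
-/

def NonCrossing (M : Finset (ℕ × ℕ)) : Prop :=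
  ∀ e ∈ M, ∀ f ∈ M, (f.1 < e.1 → f.2 ≤ e.2) ∧ (f.2 < e.2 → f.1 ≤ e.1)

theorem IsMatching.nonCrossing {n ℓ : ℕ} {M : Finset (ℕ × ℕ)} (hM : IsMatching n ℓ M) :
    NonCrossing M :=
  hM.2.2.2.2.2

section Erase

variable {M : Finset (ℕ × ℕ)} {e : ℕ × ℕ}

theorem exists_mem_erase_fst_eq_of_one_lt_degQ (h : 1 < degQ M e.1) :
    ∃ f ∈ M.erase e, f.1 = e.1 := by
  obtain ⟨f, hf, hfe⟩ := Finset.exists_mem_ne h e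
  rw [Finset.mem_filter] at hf
  exact ⟨f, Finset.mem_erase.2 ⟨hfe, hf.1⟩, hf.2⟩

theorem exists_mem_erase_snd_eq_of_one_lt_degS (h : 1 < degS M e.2) :
    ∃ g ∈ M.erase e, g.2 = e.2 := by
  obtain ⟨g, hg, hge⟩ := Finset.exists_mem_ne h e
  rw [Finset.mem_filter] at hg
  exact ⟨g, Finset.mem_erase.2 ⟨hge, hg.1⟩, hg.2⟩

theorem exists_mem_erase_of_one_lt_degQ {i j : ℕ} (hij : (i, j) ∈ M) (h : 1 < degQ M e.1) :
    ∃ j', (i, j') ∈ M.erase e := by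
  by_cases hije : (i, j) = e
  · obtain ⟨f, hf, hf1⟩ := exists_mem_erase_fst_eq_of_one_lt_degQ h
    exact ⟨f.2, (Prod.ext (by rw [hf1, ← hije]) rfl : (i, f.2) = f) ▸ hf⟩
  · exact ⟨j, Finset.mem_erase.2 ⟨hije, hij⟩⟩

theorem exists_mem_erase_of_one_lt_degS {i j : ℕ} (hij : (i, j) ∈ M) (h : 1 < degS M e.2) :
    ∃ i', (i', j) ∈ M.erase e := by
  by_cases hije : (i, j) = e
  · obtain ⟨g, hg, hg2⟩ := exists_mem_erase_snd_eq_of_one_lt_degS h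
    exact ⟨g.1, (Prod.ext rfl (by rw [hg2, ← hije]) : (g.1, j) = g) ▸ hg⟩
  · exact ⟨i, Finset.mem_erase.2 ⟨hije, hij⟩⟩

theorem NonCrossing.notMem_lowerBounds (hM : NonCrossing M)
    (hq : 1 < degQ M e.1) (hs : 1 < degS M e.2) : e ∉ lowerBounds (M : Set (ℕ × ℕ)) := by
  intro hlow
  obtain ⟨f, hf, hf1⟩ := exists_mem_erase_fst_eq_of_one_lt_degQ hq
  obtain ⟨g, hg, hg2⟩ := exists_mem_erase_snd_eq_of_one_lt_degS hs
  obtain ⟨hfe, hfM⟩ := Finset.mem_erase.1 hf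
  obtain ⟨hge, hgM⟩ := Finset.mem_erase.1 hg
  have hf2 : e.2 < f.2 :=
    lt_of_le_of_ne (hlow hfM).2 fun h => hfe (Prod.ext hf1 h.symm)
  have hg1 : e.1 < g.1 :=
    lt_of_le_of_ne (hlow hgM).1 fun h => hge (Prod.ext h.symm hg2)
  have := (hM g hgM f hfM).1 (hf1 ▸ hg1)
  omega

theorem NonCrossing.notMem_upperBounds (hM : NonCrossing M)
    (hq : 1 < degQ M e.1) (hs : 1 < degS M e.2) : e ∉ upperBounds (M : Set (ℕ × ℕ)) := by
  intro hup
  obtain ⟨f, hf, hf1⟩ := exists_mem_erase_fst_eq_of_one_lt_degQ hq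
  obtain ⟨g, hg, hg2⟩ := exists_mem_erase_snd_eq_of_one_lt_degS hs
  obtain ⟨hfe, hfM⟩ := Finset.mem_erase.1 hf
  obtain ⟨hge, hgM⟩ := Finset.mem_erase.1 hg
  have hf2 : f.2 < e.2 :=
    lt_of_le_of_ne (hup hfM).2 fun h => hfe (Prod.ext hf1 h)
  have hg1 : g.1 < e.1 :=
    lt_of_le_of_ne (hup hgM).1 fun h => hge (Prod.ext h hg2)
  have := (hM f hfM g hgM).1 (hf1 ▸ hg1)
  omega

theorem IsMatching.erase {n ℓ : ℕ} (hM : IsMatching n ℓ M)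
    (hq : 1 < degQ M e.1) (hs : 1 < degS M e.2) : IsMatching n ℓ (M.erase e) := by
  have hcross := hM.nonCrossing
  obtain ⟨hbound, hcovQ, hcovS, hfirst, hlast, -⟩ := hM
  have hlow : ((0, 0) : ℕ × ℕ) ∈ lowerBounds (M : Set (ℕ × ℕ)) :=
    fun x _ => Prod.mk_le_mk.2 ⟨Nat.zero_le _, Nat.zero_le _⟩
  have hup : (n - 1, ℓ - 1) ∈ upperBounds (M : Set (ℕ × ℕ)) := fun x hx =>
    Prod.mk_le_mk.2 ⟨Nat.le_sub_one_of_lt (hbound x hx).1, Nat.le_sub_one_of_lt (hbound x hx).2⟩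
  refine ⟨fun x hx => hbound x (Finset.mem_of_mem_erase hx),
    fun i hi => ?_, fun j hj => ?_,
    Finset.mem_erase.2 ⟨?_, hfirst⟩, Finset.mem_erase.2 ⟨?_, hlast⟩,
    fun x hx y hy => hcross x (Finset.mem_of_mem_erase hx) y (Finset.mem_of_mem_erase hy)⟩
  · obtain ⟨j, hij⟩ := hcovQ i hi
    exact exists_mem_erase_of_one_lt_degQ hij hq
  · obtain ⟨i, hij⟩ := hcovS j hj
    exact exists_mem_erase_of_one_lt_degS hij hs
  · rintro rfl
    exact hcross.notMem_lowerBounds hq hs hlow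
  · rintro rfl
    exact hcross.notMem_upperBounds hq hs hup

end Erase

theorem wCost_erase_le {w : ℕ × ℕ → ℝ} (hw : ∀ e, 0 ≤ w e) (M : Finset (ℕ × ℕ)) (e : ℕ × ℕ) :
    wCost w (M.erase e) ≤ wCost w M :=
  Finset.sum_le_sum_of_subset_of_nonneg (Finset.erase_subset e M) fun x _ _ => hw x

theorem wCost_erase_lt {w : ℕ × ℕ → ℝ} {M : Finset (ℕ × ℕ)} {e : ℕ × ℕ} (he : e ∈ M)
    (hpos : 0 < w e) : wCost w (M.erase e) < wCost w M :=
  Finset.sum_erase_lt_of_pos he hpos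

theorem matching_no_edge_with_both_degrees_large_general
    (n ℓ : ℕ)
    (w : ℕ × ℕ → ℝ) (hw : ∀ e, 0 ≤ w e)
    (M : Finset (ℕ × ℕ)) (hM : IsMatching n ℓ M) :
    (∀ e ∈ M, 1 < degQ M e.1 → 1 < degS M e.2 →
      IsMatching n ℓ (M.erase e) ∧ wCost w (M.erase e) ≤ wCost w M) ∧
    ((∀ e, 0 < w e) →
      (∀ M' : Finset (ℕ × ℕ), IsMatching n ℓ M' → wCost w M ≤ wCost w M') →
      ∀ e ∈ M, ¬(1 < degQ M e.1 ∧ 1 < degS M e.2)) :=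
  ⟨fun e _ hq hs => ⟨hM.erase hq hs, wCost_erase_le hw M e⟩,
    fun hpos hmin e he ⟨hq, hs⟩ => (hmin _ (hM.erase hq hs)).not_gt (wCost_erase_lt he (hpos e))⟩

/-- In any matching `M`, if an edge `e` joins two positions both of degree
greater than `1`, then `M \ {e}` is still a valid matching of no greater cost (for
nonnegative edge costs); hence, for strictly positive edge costs, a minimum-cost matching
contains no edge both of whose endpoints have degree greater than `1`. -/
theorem matching_no_edge_with_both_degrees_large
    (n ℓ : ℕ) (hn : 1 ≤ n) (hℓ : 1 ≤ ℓ)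
    (w : ℕ × ℕ → ℝ) (hw : ∀ e, 0 ≤ w e)
    (M : Finset (ℕ × ℕ)) (hM : IsMatching n ℓ M) :
    (∀ e ∈ M, 1 < degQ M e.1 → 1 < degS M e.2 →
      IsMatching n ℓ (M.erase e) ∧ wCost w (M.erase e) ≤ wCost w M) ∧
    ((∀ e, 0 < w e) →
      (∀ M' : Finset (ℕ × ℕ), IsMatching n ℓ M' → wCost w M ≤ wCost w M') →
      ∀ e ∈ M, ¬(1 < degQ M e.1 ∧ 1 < degS M e.2)) :=
  matching_no_edge_with_both_degrees_large_general n ℓ w hw M hM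
end

section
/- Let q be a real sequence of length n with every entry strictly less than 1/2, and let s ∈ {0,1}^ℓ be a binary sequence with ℓ ≤ n such that in some minimum-cost DTW matching M between q and s every character of q has degree 1. If s contains at least one 0, then there exists a minimum-cost DTW matching in which every position i with s[i] = 1 has degree 1. -/
open Finset

lemma List.getD_of_forall_mem {α : Type*} {p : α → Prop} {l : List α} {d : α} (hd : p d)
    (h : ∀ c ∈ l, p c) (i : ℕ) : p (l.getD i d) := by
  rcases lt_or_ge i l.length with hi | hi
  · rw [List.getD_eq_getElem l d hi]
    exact h _ (List.getElem_mem hi)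
  · rw [List.getD_eq_default l d hi]
    exact hd

lemma abs_lt_abs_sub_one_of_lt_half {x : ℝ} (h : x < 1 / 2) : |x| < |x - 1| := by
  rw [abs_of_neg (by linarith : x - 1 < 0)]
  cases abs_cases x <;> linarith

lemma Finset.sum_insert_erase_add {ι M : Type*} [DecidableEq ι] [AddCommMonoid M]
    {s : Finset ι} {x y : ι} (hx : x ∈ s) (hy : y ∉ s) (f : ι → M) :
    ∑ i ∈ insert y (s.erase x), f i + f x = ∑ i ∈ s, f i + f y := by
  rw [sum_insert fun h => hy (mem_of_mem_erase h), add_assoc, sum_erase_add _ _ hx, add_comm]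

lemma exists_first_lt_last_of_one_lt_degS {N : Finset (ℕ × ℕ)} {j : ℕ} (h : 1 < degS N j) :
    ∃ a₀ a₁, (a₀, j) ∈ N ∧ (a₁, j) ∈ N ∧ a₀ < a₁ ∧ ∀ i, (i, j) ∈ N → a₀ ≤ i ∧ i ≤ a₁ := by
  set F := (N.filter (·.2 = j)).image Prod.fst
  have hF : ∀ i, i ∈ F ↔ (i, j) ∈ N := by simp [F]
  have hcard : 1 < #F := by
    rwa [card_image_of_injOn]
    rintro ⟨i, j₁⟩ h₁ ⟨i', j₂⟩ h₂ (rfl : i = i')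
    exact Prod.ext rfl ((mem_filter.1 h₁).2.trans (mem_filter.1 h₂).2.symm)
  have hne : F.Nonempty := card_pos.1 (by omega)
  exact ⟨F.min' hne, F.max' hne, (hF _).1 (min'_mem _ _), (hF _).1 (max'_mem _ _),
    min'_lt_max'_of_card F hcard,
    fun i hi => ⟨min'_le _ _ ((hF i).2 hi), le_max' _ _ ((hF i).2 hi)⟩⟩

namespace IsMatching

variable {n ℓ : ℕ} {N : Finset (ℕ × ℕ)}

lemma one_le_degS (hN : IsMatching n ℓ N) {j : ℕ} (hj : j < ℓ) : 1 ≤ degS N j := by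
  obtain ⟨i, hi⟩ := hN.2.2.1 j hj
  exact card_pos.2 ⟨(i, j), mem_filter.2 ⟨hi, rfl⟩⟩

lemma insert_erase (hN : IsMatching n ℓ N) {a b b' a₂ : ℕ} (hab : (a, b) ∈ N) (hb' : b' < ℓ)
    (ha₂ : (a₂, b) ∈ N) (ha₂a : a₂ ≠ a) (h₀ : (a, b) ≠ (0, 0)) (h₁ : (a, b) ≠ (n - 1, ℓ - 1))
    (hcross : ∀ f ∈ N, (f.1 < a → f.2 ≤ b') ∧ (f.2 < b' → f.1 ≤ a) ∧
      (a < f.1 → b' ≤ f.2) ∧ (b' < f.2 → a ≤ f.1)) :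
    IsMatching n ℓ (insert (a, b') (N.erase (a, b))) := by
  obtain ⟨hbound, hcovq, hcovs, hfirst, hlast, hmono⟩ := hN
  have mem_new {e : ℕ × ℕ} (he : e ∈ N) (hne : e ≠ (a, b)) :
      e ∈ insert (a, b') (N.erase (a, b)) :=
    mem_insert_of_mem (mem_erase.2 ⟨hne, he⟩)
  refine ⟨?_, fun i hi => ?_, fun j hj => ?_, mem_new hfirst h₀.symm, mem_new hlast h₁.symm, ?_⟩
  · intro e he
    rcases mem_insert.1 he with rfl | he
    · exact ⟨(hbound _ hab).1, hb'⟩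
    · exact hbound e (mem_of_mem_erase he)
  · by_cases hia : i = a
    · exact ⟨b', by simp [hia]⟩
    · obtain ⟨j, hj⟩ := hcovq i hi
      exact ⟨j, mem_new hj (by simp [hia])⟩
  · by_cases hjb : j = b
    · subst hjb
      exact ⟨a₂, mem_new ha₂ (by simp [ha₂a])⟩
    · obtain ⟨i, hi⟩ := hcovs j hj
      exact ⟨i, mem_new hi (by simp [hjb])⟩
  · intro e he f hf
    rcases mem_insert.1 he with rfl | he <;> rcases mem_insert.1 hf with rfl | hf
    · exact ⟨fun h => absurd h (lt_irrefl _), fun h => absurd h (lt_irrefl _)⟩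
    · exact ⟨(hcross f (mem_of_mem_erase hf)).1, (hcross f (mem_of_mem_erase hf)).2.1⟩
    · exact (hcross e (mem_of_mem_erase he)).2.2
    · exact hmono e (mem_of_mem_erase he) f (mem_of_mem_erase hf)

lemma shift_last_succ (hN : IsMatching n ℓ N) {a a₀ j : ℕ} (haj : (a, j) ∈ N)
    (ha₀ : (a₀, j) ∈ N) (ha₀a : a₀ < a) (hlast : ∀ i, (i, j) ∈ N → i ≤ a) (hj : j + 1 < ℓ) :
    IsMatching n ℓ (insert (a, j + 1) (N.erase (a, j))) := by
  refine hN.insert_erase haj hj ha₀ ha₀a.ne (by grind) (by grind) fun f hf => ?_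
  have h₁ := hN.2.2.2.2.2 _ haj f hf
  have h₂ := hN.2.2.2.2.2 f hf _ haj
  have h₃ : f.2 = j → f.1 ≤ a := fun h => hlast f.1 (h ▸ hf)
  omega

lemma shift_first_pred (hN : IsMatching n ℓ N) {a a₁ j : ℕ} (haj : (a, j) ∈ N)
    (ha₁ : (a₁, j) ∈ N) (haa₁ : a < a₁) (hfirst : ∀ i, (i, j) ∈ N → a ≤ i) (hj : 0 < j) :
    IsMatching n ℓ (insert (a, j - 1) (N.erase (a, j))) := by
  have ha₁n := (hN.1 _ ha₁).1
  refine hN.insert_erase haj (by have := (hN.1 _ haj).2; omega) ha₁ haa₁.ne' (by grind)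
    (by grind) fun f hf => ?_
  have h₁ := hN.2.2.2.2.2 _ haj f hf
  have h₂ := hN.2.2.2.2.2 f hf _ haj
  have h₃ : f.2 = j → a ≤ f.1 := fun h => hfirst f.1 (h ▸ hf)
  omega

lemma exists_shift_toward (hN : IsMatching n ℓ N) {j z : ℕ} (hj : 1 < degS N j) (hz : z < ℓ)
    (hjz : j ≠ z) :
    ∃ a b', (a, j) ∈ N ∧ Nat.dist b' z < Nat.dist j z ∧
      IsMatching n ℓ (insert (a, b') (N.erase (a, j))) := by
  obtain ⟨a₀, a₁, h₀, h₁, hlt, hext⟩ := exists_first_lt_last_of_one_lt_degS hj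
  rcases hjz.lt_or_gt with hjz | hjz
  · exact ⟨a₁, j + 1, h₁, by unfold Nat.dist; omega,
      hN.shift_last_succ h₁ h₀ hlt (fun i hi => (hext i hi).2) (by omega)⟩
  · exact ⟨a₀, j - 1, h₀, by unfold Nat.dist; omega,
      hN.shift_first_pred h₀ h₁ hlt (fun i hi => (hext i hi).1) (by omega)⟩

end IsMatching

def totalDist (z : ℕ) (N : Finset (ℕ × ℕ)) : ℕ := ∑ e ∈ N, Nat.dist e.2 z

lemma totalDist_insert_erase_lt {z : ℕ} {N : Finset (ℕ × ℕ)} {a b b' : ℕ} (hab : (a, b) ∈ N)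
    (hab' : (a, b') ∉ N) (hdist : Nat.dist b' z < Nat.dist b z) :
    totalDist z (insert (a, b') (N.erase (a, b))) < totalDist z N := by
  have := sum_insert_erase_add hab hab' fun e => Nat.dist e.2 z
  unfold totalDist
  simp only at this
  omega

lemma matchCost_insert_erase_lt_or_eq {q s : List ℝ} (hq : ∀ c ∈ q, c < 1 / 2)
    (hs : ∀ c ∈ s, c = 0 ∨ c = 1) {N : Finset (ℕ × ℕ)} {a b b' : ℕ} (hbb' : b' ≠ b)
    (hab : (a, b) ∈ N) (hsb : s.getD b 0 = 1) :
    matchCost q s (insert (a, b') (N.erase (a, b))) < matchCost q s N ∨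
      (a, b') ∉ N ∧ matchCost q s (insert (a, b') (N.erase (a, b))) = matchCost q s N := by
  have hqa : q.getD a 0 < 1 / 2 := List.getD_of_forall_mem (by norm_num) hq a
  have hpos : 0 < |q.getD a 0 - 1| := abs_pos.2 (by linarith)
  by_cases hab' : (a, b') ∈ N
  · left
    have hsub := sum_erase_add N (fun e => |q.getD e.1 0 - s.getD e.2 0|) hab
    rw [insert_eq_of_mem (mem_erase.2 ⟨by simpa using hbb', hab'⟩)]
    simp only [matchCost, hsb] at hsub ⊢
    linarith
  · have hsum := sum_insert_erase_add hab hab' fun e => |q.getD e.1 0 - s.getD e.2 0|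
    simp only [hsb] at hsum
    rcases List.getD_of_forall_mem (p := fun c => c = 0 ∨ c = 1) (Or.inl rfl) hs b'
      with hsb' | hsb'
    · left
      have := abs_lt_abs_sub_one_of_lt_half hqa
      simp only [matchCost, hsb', sub_zero] at hsum ⊢
      linarith
    · right
      refine ⟨hab', ?_⟩
      simp only [matchCost, hsb'] at hsum ⊢
      linarith

theorem exists_optimal_matching_ones_degree_one_general
    (n ℓ : ℕ) (q s : List ℝ) (hslen : s.length = ℓ)
    (hqlt : ∀ c ∈ q, c < 1 / 2)
    (hbin : ∀ c ∈ s, c = 0 ∨ c = 1) (hzero : (0 : ℝ) ∈ s)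
    (M : Finset (ℕ × ℕ)) (hM : IsMatching n ℓ M)
    (hopt : ∀ M' : Finset (ℕ × ℕ), IsMatching n ℓ M' →
      matchCost q s M ≤ matchCost q s M') :
    ∃ N : Finset (ℕ × ℕ), IsMatching n ℓ N ∧
      (∀ M' : Finset (ℕ × ℕ), IsMatching n ℓ M' →
        matchCost q s N ≤ matchCost q s M') ∧
      ∀ i, i < ℓ → s.getD i 0 = 1 → degS N i = 1 := by
  obtain ⟨z, hz, hsz⟩ : ∃ z < ℓ, s.getD z 0 = 0 := by
    obtain ⟨z, hz, hz0⟩ := List.getElem_of_mem hzero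
    exact ⟨z, hslen ▸ hz, by rw [List.getD_eq_getElem _ _ hz, hz0]⟩
  obtain ⟨N, ⟨hN, hNopt⟩, hNmin⟩ := (measure (totalDist z)).wf.has_min
    {N | IsMatching n ℓ N ∧ ∀ M', IsMatching n ℓ M' → matchCost q s N ≤ matchCost q s M'}
    ⟨M, hM, hopt⟩
  refine ⟨N, hN, hNopt, fun j hj hsj => ?_⟩
  by_contra hdeg
  have hj2 : 1 < degS N j := by have := hN.one_le_degS hj; omega
  have hjz : j ≠ z := by
    rintro rfl
    exact zero_ne_one (hsz.symm.trans hsj)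
  obtain ⟨a, b', hab, hdist, hN'⟩ := hN.exists_shift_toward hj2 hz hjz
  rcases matchCost_insert_erase_lt_or_eq hqlt hbin (ne_of_apply_ne (·.dist z) hdist.ne) hab hsj
    with hlt | ⟨hab', heq⟩
  · exact hlt.not_ge (hNopt _ hN')
  · exact hNmin _ ⟨hN', fun M' hM' => heq ▸ hNopt M' hM'⟩
      (totalDist_insert_erase_lt hab hab' hdist)

/-- Let `q` be a real sequence of length `n` with all entries `< 1/2` and
let `s` be a binary sequence of length `ℓ ≤ n` containing at least one `0`.  If in some
minimum-cost matching between `q` and `s` every character of `q` has degree `1`, then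
there exists a minimum-cost matching in which every position `i` with `s[i] = 1` has
degree `1`. -/
theorem exists_optimal_matching_ones_degree_one
    (n ℓ : ℕ) (q s : List ℝ) (hqlen : q.length = n) (hslen : s.length = ℓ)
    (hℓn : ℓ ≤ n)
    (hqlt : ∀ c ∈ q, c < 1 / 2)
    (hbin : ∀ c ∈ s, c = 0 ∨ c = 1) (hzero : (0 : ℝ) ∈ s)
    (M : Finset (ℕ × ℕ)) (hM : IsMatching n ℓ M)
    (hopt : ∀ M' : Finset (ℕ × ℕ), IsMatching n ℓ M' →
      matchCost q s M ≤ matchCost q s M')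
    (hdeg : ∀ i, i < n → degQ M i = 1) :
    ∃ N : Finset (ℕ × ℕ), IsMatching n ℓ N ∧
      (∀ M' : Finset (ℕ × ℕ), IsMatching n ℓ M' →
        matchCost q s N ≤ matchCost q s M') ∧
      ∀ i, i < ℓ → s.getD i 0 = 1 → degS N i = 1 :=
  exists_optimal_matching_ones_degree_one_general n ℓ q s hslen hqlt hbin hzero M hM hopt
end

section
/- For two binary sequences s and q, the Fréchet distance d_F(s,q) = 0 if and only if s and q have the same condensed expression. Moreover, for binary sequences the Fréchet distance takes only the values 0 and 1. -/
/-- The discrete Fréchet distance: the minimum over all pairs of equal-length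
expansions of the `ℓ∞` distance between them. -/
noncomputable def frechet (x y : List ℝ) : ℝ :=
  sInf { c | ∃ x' y', IsExpansion x x' ∧ IsExpansion y y' ∧ x'.length = y'.length ∧
    c = (List.zipWith (fun a b => |a - b|) x' y').foldr max 0 }

open Classical in
/-- The condensed expression of a sequence: collapse each maximal run to one character. -/
noncomputable def condensed (l : List ℝ) : List ℝ := l.destutter (· ≠ ·)

/-!
An expansion never changes the condensed expression, every sequence is an expansion of its
condensed expression, and two expansions of the same sequence have a common expansion (multiply
the multiplicities). So `s` and `q` admit a coupling of cost `0`, i.e. a common expansion, exactly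
when `condensed s = condensed q`. For binary sequences every coupling costs `0` or `1`, so the
infimum defining `frechet s q` is attained in `{0, 1}`.
-/

def stretch {α : Type*} (ks : List ℕ) (x : List α) : List α :=
  (List.zipWith (fun k a => List.replicate k a) ks x).flatten

section Stretch

variable {α : Type*}

theorem stretch_cons_cons (k : ℕ) (ks : List ℕ) (a : α) (x : List α) :
    stretch (k :: ks) (a :: x) = List.replicate k a ++ stretch ks x :=
  rfl

theorem stretch_succ_cons (k : ℕ) (ks : List ℕ) (a : α) (x : List α) :
    stretch ((k + 1) :: ks) (a :: x) = a :: (List.replicate k a ++ stretch ks x) :=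
  rfl

theorem exists_eq_succ_cons_of_pos {ks : List ℕ} {x : List α} {b : α}
    (hlen : ks.length = (b :: x).length) (hpos : ∀ k ∈ ks, 0 < k) :
    ∃ k ks', ks = (k + 1) :: ks' ∧ ks'.length = x.length ∧ ∀ k ∈ ks', 0 < k := by
  obtain ⟨_ | k, ks', rfl⟩ := List.exists_cons_of_length_eq_add_one hlen
  · exact absurd (hpos 0 List.mem_cons_self) (lt_irrefl 0)
  · exact ⟨k, ks', rfl, by simpa using hlen, fun j hj => hpos j (List.mem_cons_of_mem _ hj)⟩

theorem mem_of_mem_stretch {ks : List ℕ} {x : List α} {c : α} (h : c ∈ stretch ks x) :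
    c ∈ x := by
  induction x generalizing ks with
  | nil => cases ks <;> simp [stretch] at h
  | cons a x ih =>
    cases ks with
    | nil => simp [stretch] at h
    | cons k ks =>
      rcases List.mem_append.1 h with h | h
      · simp [List.eq_of_mem_replicate h]
      · exact List.mem_cons_of_mem a (ih h)

theorem stretch_append {ks js : List ℕ} {x y : List α} (h : ks.length = x.length) :
    stretch (ks ++ js) (x ++ y) = stretch ks x ++ stretch js y := by
  rw [stretch, List.zipWith_append h, List.flatten_append]; rfl

theorem length_stretch_replicate (n : ℕ) (x : List α) :
    (stretch (List.replicate x.length n) x).length = x.length * n := by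
  induction x with
  | nil => simp [stretch]
  | cons a x ih =>
    rw [List.length_cons, List.replicate_succ, stretch_cons_cons, List.length_append,
      List.length_replicate, ih, add_mul, one_mul, add_comm]

end Stretch

section Destutter

variable {α : Type*} [DecidableEq α]

theorem destutter'_ne_cons (a b : α) (l : List α) :
    (b :: l).destutter' (· ≠ ·) a =
      if a = b then l.destutter' (· ≠ ·) b else a :: l.destutter' (· ≠ ·) b := by
  split_ifs with h
  · subst h; exact List.destutter'_cons_neg _ (not_not_intro rfl)
  · exact List.destutter'_cons_pos _ h

theorem destutter'_ne_replicate_append (k : ℕ) (a : α) (l : List α) :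
    (List.replicate k a ++ l).destutter' (· ≠ ·) a = l.destutter' (· ≠ ·) a := by
  induction k with
  | zero => rfl
  | succ k ih => rw [List.replicate_succ, List.cons_append, destutter'_ne_cons, if_pos rfl, ih]

theorem destutter'_ne_stretch {ks : List ℕ} {x : List α} (hlen : ks.length = x.length)
    (hpos : ∀ k ∈ ks, 0 < k) (a : α) :
    (stretch ks x).destutter' (· ≠ ·) a = x.destutter' (· ≠ ·) a := by
  induction x generalizing ks a with
  | nil => rw [List.length_eq_zero_iff.1 hlen]; rfl
  | cons b x ih =>
    obtain ⟨k, ks, rfl, hlen, hpos⟩ := exists_eq_succ_cons_of_pos hlen hpos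
    rw [stretch_succ_cons, destutter'_ne_cons, destutter'_ne_replicate_append, ih hlen hpos,
      destutter'_ne_cons]

theorem destutter_ne_stretch {ks : List ℕ} {x : List α} (hlen : ks.length = x.length)
    (hpos : ∀ k ∈ ks, 0 < k) :
    (stretch ks x).destutter (· ≠ ·) = x.destutter (· ≠ ·) := by
  cases x with
  | nil => rw [List.length_eq_zero_iff.1 hlen]; rfl
  | cons b x =>
    obtain ⟨k, ks, rfl, hlen, hpos⟩ := exists_eq_succ_cons_of_pos hlen hpos
    rw [stretch_succ_cons, List.destutter_cons', List.destutter_cons',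
      destutter'_ne_replicate_append, destutter'_ne_stretch hlen hpos]

end Destutter

namespace IsExpansion

theorem iff_exists_stretch {x x' : List ℝ} :
    IsExpansion x x' ↔
      ∃ ks : List ℕ, ks.length = x.length ∧ (∀ k ∈ ks, 0 < k) ∧ x' = stretch ks x :=
  Iff.rfl

theorem nil : IsExpansion [] [] := ⟨[], rfl, by simp, rfl⟩

theorem cons (a : ℝ) {x x' : List ℝ} (h : IsExpansion x x') :
    IsExpansion (a :: x) (a :: x') := by
  obtain ⟨ks, hlen, hpos, rfl⟩ := h
  refine ⟨1 :: ks, by simp [hlen], ?_, rfl⟩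
  simpa using hpos

theorem dup_head {a : ℝ} {x x' : List ℝ} (h : IsExpansion x (a :: x')) :
    IsExpansion x (a :: a :: x') := by
  obtain ⟨ks, hlen, hpos, hx'⟩ := iff_exists_stretch.1 h
  cases x with
  | nil => simp [List.length_eq_zero_iff.1 hlen, stretch] at hx'
  | cons b x =>
    obtain ⟨k, ks, rfl, hlen, hpos⟩ := exists_eq_succ_cons_of_pos hlen hpos
    rw [stretch_succ_cons, List.cons.injEq] at hx'
    obtain ⟨rfl, rfl⟩ := hx'
    exact ⟨(k + 2) :: ks, by simpa using hlen, by simpa using hpos, rfl⟩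

theorem append {u u' v v' : List ℝ} (hu : IsExpansion u u') (hv : IsExpansion v v') :
    IsExpansion (u ++ v) (u' ++ v') := by
  obtain ⟨ks, hks, pks, rfl⟩ := hu
  obtain ⟨js, hjs, pjs, rfl⟩ := hv
  refine ⟨ks ++ js, by simp [hks, hjs], ?_, (stretch_append hks).symm⟩
  simpa [or_imp, forall_and] using ⟨pks, pjs⟩

theorem subset {x x' : List ℝ} (h : IsExpansion x x') : x' ⊆ x := by
  obtain ⟨ks, -, -, rfl⟩ := h
  exact fun _ => mem_of_mem_stretch

theorem condensed_eq {x x' : List ℝ} (h : IsExpansion x x') : condensed x' = condensed x := by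
  obtain ⟨ks, hlen, hpos, rfl⟩ := h
  exact destutter_ne_stretch hlen hpos

end IsExpansion

theorem isExpansion_stretch_replicate (x : List ℝ) {n : ℕ} (hn : 0 < n) :
    IsExpansion x (stretch (List.replicate x.length n) x) :=
  ⟨_, List.length_replicate, fun _ hk => List.eq_of_mem_replicate hk ▸ hn, rfl⟩

theorem isExpansion_replicate_mul (a : ℝ) (m : ℕ) {n : ℕ} (hn : 0 < n) :
    IsExpansion (List.replicate m a) (List.replicate (m * n) a) :=
  ⟨List.replicate m n, by simp, fun _ hk => List.eq_of_mem_replicate hk ▸ hn, by simp⟩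

theorem isExpansion_stretch_mul {d : List ℝ} (ms : List ℕ) {ns : List ℕ}
    (hlen : ns.length = d.length) (hpos : ∀ n ∈ ns, 0 < n) :
    IsExpansion (stretch ms d) (stretch (List.zipWith (· * ·) ms ns) d) := by
  induction d generalizing ms ns with
  | nil => simpa [stretch] using IsExpansion.nil
  | cons a d ih =>
    obtain ⟨n, ns, rfl⟩ := List.exists_cons_of_length_eq_add_one hlen
    simp only [List.length_cons, Nat.add_right_cancel_iff, List.mem_cons, forall_eq_or_imp]
      at hlen hpos
    cases ms with
    | nil => simpa [stretch] using IsExpansion.nil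
    | cons m ms =>
      exact (isExpansion_replicate_mul a m hpos.1).append (ih ms hlen hpos.2)

theorem IsExpansion.exists_common {d u v : List ℝ} (hu : IsExpansion d u) (hv : IsExpansion d v) :
    ∃ z, IsExpansion u z ∧ IsExpansion v z := by
  obtain ⟨ms, hms, pms, rfl⟩ := hu
  obtain ⟨ns, hns, pns, rfl⟩ := hv
  refine ⟨_, isExpansion_stretch_mul ms hns pns, ?_⟩
  rw [List.zipWith_comm_of_comm mul_comm]
  exact isExpansion_stretch_mul ns hms pms

theorem isExpansion_destutter'_ne (a : ℝ) (l : List ℝ) :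
    IsExpansion (l.destutter' (· ≠ ·) a) (a :: l) := by
  induction l generalizing a with
  | nil => exact IsExpansion.nil.cons a
  | cons b l ih =>
    rw [destutter'_ne_cons]
    split_ifs with h
    · subst h; exact (ih a).dup_head
    · exact (ih b).cons a

theorem isExpansion_condensed (l : List ℝ) : IsExpansion (condensed l) l := by
  cases l with
  | nil => exact IsExpansion.nil
  | cons a l => exact isExpansion_destutter'_ne a l

theorem exists_common_expansion_iff {s q : List ℝ} :
    (∃ z, IsExpansion s z ∧ IsExpansion q z) ↔ condensed s = condensed q := by
  constructor
  · rintro ⟨z, hs, hq⟩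
    rw [← hs.condensed_eq, ← hq.condensed_eq]
  · intro h
    have hs := isExpansion_condensed s
    rw [h] at hs
    exact hs.exists_common (isExpansion_condensed q)

def supDist (x y : List ℝ) : ℝ :=
  (List.zipWith (fun a b => |a - b|) x y).foldr max 0

section SupDist

@[simp]
theorem supDist_cons_cons (a b : ℝ) (x y : List ℝ) :
    supDist (a :: x) (b :: y) = max |a - b| (supDist x y) :=
  rfl

theorem supDist_nonneg (x y : List ℝ) : 0 ≤ supDist x y := by
  induction x generalizing y with
  | nil => exact le_rfl
  | cons a x ih =>
    cases y with
    | nil => exact le_rfl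
    | cons b y => exact le_max_of_le_right (ih y)

theorem supDist_eq_zero_iff {x y : List ℝ} (hlen : x.length = y.length) :
    supDist x y = 0 ↔ x = y := by
  induction x generalizing y with
  | nil => simp [List.length_eq_zero_iff.1 hlen.symm, supDist]
  | cons a x ih =>
    obtain ⟨b, y, rfl⟩ := List.exists_cons_of_length_eq_add_one hlen.symm
    rw [supDist_cons_cons, List.cons.injEq, ← ih (by simpa using hlen), ← sub_eq_zero,
      ← abs_eq_zero]
    have htail := supDist_nonneg x y
    have hhead := abs_nonneg (a - b)
    grind

theorem supDist_eq_zero_or_one {x y : List ℝ} (hx : ∀ c ∈ x, c = 0 ∨ c = 1)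
    (hy : ∀ c ∈ y, c = 0 ∨ c = 1) : supDist x y = 0 ∨ supDist x y = 1 := by
  induction x generalizing y with
  | nil => exact Or.inl rfl
  | cons a x ih =>
    cases y with
    | nil => exact Or.inl rfl
    | cons b y =>
      simp only [List.mem_cons, forall_eq_or_imp] at hx hy
      rw [supDist_cons_cons]
      rcases hx.1 with rfl | rfl <;> rcases hy.1 with rfl | rfl <;>
        rcases ih hx.2 hy.2 with h | h <;> norm_num [h]

end SupDist

/-- For nonempty binary sequences `s` and `q`, the Fréchet distance is `0`
iff `s` and `q` have the same condensed expression; moreover on binary sequences it only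
takes the values `0` and `1`. -/
theorem frechet_binary_eq_zero_iff_condensed_eq
    (s q : List ℝ) (hs : s ≠ []) (hq : q ≠ [])
    (hsbin : ∀ c ∈ s, c = 0 ∨ c = 1) (hqbin : ∀ c ∈ q, c = 0 ∨ c = 1) :
    (frechet s q = 0 ↔ condensed s = condensed q) ∧
      (frechet s q = 0 ∨ frechet s q = 1) := by
  set S := {c | ∃ x' y', IsExpansion s x' ∧ IsExpansion q y' ∧ x'.length = y'.length ∧
    c = supDist x' y'}
  have hS01 : S ⊆ {0, 1} := by
    rintro _ ⟨x', y', hx, hy, -, rfl⟩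
    exact supDist_eq_zero_or_one (fun c hc => hsbin c (hx.subset hc))
      (fun c hc => hqbin c (hy.subset hc))
  have hzero : 0 ∈ S ↔ condensed s = condensed q := by
    rw [← exists_common_expansion_iff]
    constructor
    · rintro ⟨x', y', hx, hy, hlen, h⟩
      rw [eq_comm, supDist_eq_zero_iff hlen] at h
      exact ⟨y', h ▸ hx, hy⟩
    · rintro ⟨z, hs, hq⟩
      exact ⟨z, z, hs, hq, rfl, ((supDist_eq_zero_iff rfl).2 rfl).symm⟩
  have hne : S.Nonempty :=
    ⟨_, _, _, isExpansion_stretch_replicate s (List.length_pos_iff.2 hq),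
      isExpansion_stretch_replicate q (List.length_pos_iff.2 hs),
      by rw [length_stretch_replicate, length_stretch_replicate, mul_comm], rfl⟩
  have hfinite : S.Finite := (Set.toFinite _).subset hS01
  have hmem : frechet s q ∈ S := hne.csInf_mem hfinite
  refine ⟨⟨fun h => hzero.1 (h ▸ hmem), fun h => ?_⟩, hS01 hmem⟩
  obtain ⟨x', y', -, -, -, hxy⟩ := hmem
  exact le_antisymm (csInf_le hfinite.bddBelow (hzero.2 h)) (hxy ▸ supDist_nonneg x' y')
end

section
/- Let x ∈ {0,1}^m and y ∈ {0,1}^n be binary strings with x[1] ≠ y[1], let a = lor(x,1) and b = lor(y,1) be the lengths of their first runs, and let m' = #runs(x) ≥ n' = #runs(y). If m' = n' = 1 then d_DTW(x,y) = max(a,b); if m' > n' = 1 then d_DTW(x,y) = a + d_DTW(x[a+1,m], y); and if n' > 1 then d_DTW(x,y) = min(a + d_DTW(x[a+1,m], y), b + d_DTW(x, y[b+1,n])). -/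
open Classical in
/-- The number of runs (maximal blocks of equal characters) of a sequence. -/
noncomputable def numRuns (l : List ℝ) : ℕ := (l.destutter (· ≠ ·)).length

open Classical in
/-- The length of the first run of a sequence. -/
noncomputable def firstRunLen (l : List ℝ) : ℕ :=
  (l.takeWhile (fun a => decide (a = l.headD 0))).length

/-!
Write `x = cᵃ u` and `y = dᵇ v` with `c ≠ d`; for binary strings `u` is empty or starts with `d`,
and `v` is empty or starts with `c`. Two equal-length expansions begin with runs `c^A` and `d^B`,
`A ≥ a`, `B ≥ b`, whose overlap of length `min A B` costs `|c - d|` per position. If `A ≤ B`, the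
rest pairs an expansion of `u` with `d^(B-A)` followed by an expansion of `v`; prepending `dᵇ` to
both sides costs nothing (`u` starts with `d`), which exhibits it as an alignment of `u` with `dᵇ v`,
so the total is at least `a |c - d| + dtw u y`. The case `B ≤ A` is symmetric and impossible when
`v` is empty. Conversely, matching `cᵃ` against `dᵃ` prepended to any alignment of `(u, y)` shows
`dtw x y ≤ a |c - d| + dtw u y`.
-/

open List

theorem isExpansion_nil_iff {z : List ℝ} : IsExpansion [] z ↔ z = [] := by
  constructor
  · rintro ⟨ks, -, -, rfl⟩
    simp
  · rintro rfl
    exact ⟨[], rfl, by simp, rfl⟩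

theorem isExpansion_cons_iff {a : ℝ} {l z : List ℝ} :
    IsExpansion (a :: l) z ↔ ∃ k, 0 < k ∧ ∃ l', IsExpansion l l' ∧ z = replicate k a ++ l' := by
  constructor
  · rintro ⟨_ | ⟨k, ks⟩, hlen, hpos, rfl⟩
    · simp at hlen
    · rw [forall_mem_cons] at hpos
      exact ⟨k, hpos.1, _, ⟨ks, by simpa using hlen, hpos.2, rfl⟩, rfl⟩
  · rintro ⟨k, hk, l', ⟨ks, hlen, hpos, rfl⟩, rfl⟩
    exact ⟨k :: ks, by simpa using hlen, forall_mem_cons.2 ⟨hk, hpos⟩, rfl⟩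

namespace IsExpansion

theorem refl : ∀ l : List ℝ, IsExpansion l l
  | [] => isExpansion_nil_iff.2 rfl
  | _ :: l => isExpansion_cons_iff.2 ⟨1, one_pos, l, refl l, rfl⟩

theorem append_s19 {s t p q : List ℝ} (hs : IsExpansion s p) (ht : IsExpansion t q) :
    IsExpansion (s ++ t) (p ++ q) := by
  induction s generalizing p with
  | nil => rwa [isExpansion_nil_iff.1 hs]
  | cons _ s ih =>
    obtain ⟨k, hk, s', hs', rfl⟩ := isExpansion_cons_iff.1 hs
    exact isExpansion_cons_iff.2 ⟨k, hk, s' ++ q, ih hs', (append_assoc ..)⟩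

theorem replicate_append_head {l p : List ℝ} {c : ℝ} (h : IsExpansion l p)
    (hc : l.head? = some c) (j : ℕ) : IsExpansion l (replicate j c ++ p) := by
  obtain ⟨t, rfl⟩ := head?_eq_some_iff.1 hc
  obtain ⟨k, hk, t', ht', rfl⟩ := isExpansion_cons_iff.1 h
  exact isExpansion_cons_iff.2 ⟨j + k, by omega, t', ht', by rw [replicate_add, append_assoc]⟩

theorem exists_of_replicate_append {n : ℕ} {c : ℝ} {u z : List ℝ}
    (h : IsExpansion (replicate n c ++ u) z) :
    ∃ N, n ≤ N ∧ ∃ u', IsExpansion u u' ∧ z = replicate N c ++ u' := by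
  induction n generalizing z with
  | zero => exact ⟨0, le_rfl, z, h, rfl⟩
  | succ n ih =>
    obtain ⟨k, hk, z', hz', rfl⟩ := isExpansion_cons_iff.1 h
    obtain ⟨N, hN, u', hu', rfl⟩ := ih hz'
    exact ⟨k + N, by omega, u', hu', by rw [replicate_add, append_assoc]⟩

theorem eq_replicate {n : ℕ} {c : ℝ} {z : List ℝ} (h : IsExpansion (replicate n c) z) :
    ∃ N, n ≤ N ∧ z = replicate N c := by
  obtain ⟨N, hN, u', hu', rfl⟩ := exists_of_replicate_append (u := []) (by simpa using h)
  exact ⟨N, hN, by simp [isExpansion_nil_iff.1 hu']⟩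

end IsExpansion

theorem isExpansion_replicate {n N : ℕ} {c : ℝ} (hn : 0 < n) (hN : n ≤ N) :
    IsExpansion (replicate n c) (replicate N c) := by
  have h := (IsExpansion.refl (replicate n c)).replicate_append_head (c := c)
    (by simp [head?_replicate, hn.ne']) (N - n)
  rwa [← replicate_add, Nat.sub_add_cancel hN] at h

theorem exists_isExpansion_length_eq {x y : List ℝ} (hx : x ≠ []) (hy : y ≠ []) :
    ∃ x' y', IsExpansion x x' ∧ IsExpansion y y' ∧ x'.length = y'.length := by
  obtain ⟨c, s, rfl⟩ := exists_cons_of_ne_nil hx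
  obtain ⟨d, t, rfl⟩ := exists_cons_of_ne_nil hy
  refine ⟨_, _, (IsExpansion.refl _).replicate_append_head rfl ((d :: t).length - (c :: s).length),
    (IsExpansion.refl _).replicate_append_head rfl ((c :: s).length - (d :: t).length), ?_⟩
  simp only [length_append, length_replicate]
  omega

def alignCost (p q : List ℝ) : ℝ := (zipWith (fun a b => |a - b|) p q).sum

theorem alignCost_nonneg (p q : List ℝ) : 0 ≤ alignCost p q :=
  sum_nonneg fun _ h => by
    obtain ⟨i, hi, rfl⟩ := mem_iff_getElem.1 h
    simp

theorem alignCost_comm (p q : List ℝ) : alignCost p q = alignCost q p := by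
  simp only [alignCost]
  rw [zipWith_comm]
  simp_rw [abs_sub_comm]

theorem alignCost_append {p₁ q₁ : List ℝ} (p₂ q₂ : List ℝ) (h : p₁.length = q₁.length) :
    alignCost (p₁ ++ p₂) (q₁ ++ q₂) = alignCost p₁ q₁ + alignCost p₂ q₂ := by
  simp only [alignCost, zipWith_append h, sum_append]

theorem alignCost_replicate (n : ℕ) (c d : ℝ) :
    alignCost (replicate n c) (replicate n d) = n * |c - d| := by
  simp [alignCost]

theorem dtw_le {x y x' y' : List ℝ} (hx : IsExpansion x x') (hy : IsExpansion y y')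
    (hlen : x'.length = y'.length) : dtw x y ≤ alignCost x' y' :=
  csInf_le ⟨0, by rintro _ ⟨p, q, -, -, -, rfl⟩; exact alignCost_nonneg p q⟩
    ⟨x', y', hx, hy, hlen, rfl⟩

theorem le_dtw {x y : List ℝ} {C : ℝ} (hx : x ≠ []) (hy : y ≠ [])
    (h : ∀ x' y', IsExpansion x x' → IsExpansion y y' → x'.length = y'.length →
      C ≤ alignCost x' y') : C ≤ dtw x y := by
  obtain ⟨x', y', hx', hy', hlen⟩ := exists_isExpansion_length_eq hx hy
  refine le_csInf ⟨_, x', y', hx', hy', hlen, rfl⟩ ?_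
  rintro _ ⟨p, q, hp, hq, hpq, rfl⟩
  exact h p q hp hq hpq

theorem dtw_comm (x y : List ℝ) : dtw x y = dtw y x := by
  unfold dtw
  congr 1
  ext C
  constructor <;> rintro ⟨p, q, hp, hq, hpq, rfl⟩ <;>
    exact ⟨q, p, hq, hp, hpq.symm, alignCost_comm p q⟩

theorem dtw_replicate_replicate {a b : ℕ} (c d : ℝ) (ha : 0 < a) (hb : 0 < b) :
    dtw (replicate a c) (replicate b d) = max a b * |c - d| := by
  refine le_antisymm ?_ (le_dtw (by simp [ha.ne']) (by simp [hb.ne']) ?_)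
  · calc dtw (replicate a c) (replicate b d)
        ≤ alignCost (replicate (max a b) c) (replicate (max a b) d) :=
          dtw_le (isExpansion_replicate ha (le_max_left a b))
            (isExpansion_replicate hb (le_max_right a b)) (by simp)
      _ = max a b * |c - d| := by rw [alignCost_replicate, Nat.cast_max]
  · intro x' y' hx' hy' hlen
    obtain ⟨A, haA, rfl⟩ := hx'.eq_replicate
    obtain ⟨B, hbB, rfl⟩ := hy'.eq_replicate
    obtain rfl : A = B := by simpa using hlen
    rw [alignCost_replicate]
    gcongr
    exact_mod_cast max_le haA hbB

theorem dtw_replicate_append_le {a : ℕ} {c d : ℝ} {u w : List ℝ} (hu : u ≠ [])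
    (hw : w.head? = some d) : dtw (replicate a c ++ u) w ≤ a * |c - d| + dtw u w := by
  rw [← sub_le_iff_le_add']
  refine le_dtw hu (by rintro rfl; simp at hw) fun u' w' hu' hw' hlen => ?_
  rw [sub_le_iff_le_add']
  calc dtw (replicate a c ++ u) w
      ≤ alignCost (replicate a c ++ u') (replicate a d ++ w') :=
        dtw_le ((IsExpansion.refl _).append_s19 hu') (hw'.replicate_append_head hw a) (by simp [hlen])
    _ = a * |c - d| + alignCost u' w' := by
        rw [alignCost_append _ _ (by simp), alignCost_replicate]

theorem add_dtw_le_alignCost {a b A B : ℕ} {c d : ℝ} {u v u' v' : List ℝ}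
    (hu : u.head? = some d) (hb : 0 < b) (haA : a ≤ A) (hAB : A ≤ B)
    (hu' : IsExpansion u u') (hv' : IsExpansion v v') (hlen : A + u'.length = B + v'.length) :
    a * |c - d| + dtw u (replicate b d ++ v)
      ≤ alignCost (replicate A c ++ u') (replicate B d ++ v') := by
  have hrest : dtw u (replicate b d ++ v) ≤ alignCost u' (replicate (B - A) d ++ v') :=
    calc dtw u (replicate b d ++ v)
        ≤ alignCost (replicate b d ++ u') (replicate b d ++ (replicate (B - A) d ++ v')) := by
          refine dtw_le (hu'.replicate_append_head hu b) ?_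
            (by simp only [length_append, length_replicate]; omega)
          rw [← append_assoc, ← replicate_add]
          exact (isExpansion_replicate hb (Nat.le_add_right b _)).append_s19 hv'
      _ = alignCost u' (replicate (B - A) d ++ v') := by
          rw [alignCost_append _ _ (by simp), alignCost_replicate, sub_self, abs_zero, mul_zero,
            zero_add]
  have hA : (a : ℝ) * |c - d| ≤ A * |c - d| := by gcongr
  rw [← Nat.add_sub_cancel' hAB, replicate_add, append_assoc, alignCost_append _ _ (by simp),
    alignCost_replicate]
  linarith

theorem dtw_replicate_append_replicate {a b : ℕ} {c d : ℝ} {u : List ℝ}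
    (hu : u.head? = some d) (hb : 0 < b) :
    dtw (replicate a c ++ u) (replicate b d) = a * |c - d| + dtw u (replicate b d) := by
  have hu₀ : u ≠ [] := by rintro rfl; simp at hu
  refine le_antisymm (dtw_replicate_append_le hu₀ (by simp [head?_replicate, hb.ne']))
    (le_dtw (by simp [hu₀]) (by simp [hb.ne']) fun x' y' hx' hy' hlen => ?_)
  obtain ⟨A, haA, u', hu', rfl⟩ := hx'.exists_of_replicate_append
  obtain ⟨B, -, rfl⟩ := hy'.eq_replicate
  simp only [length_append, length_replicate] at hlen
  simpa using add_dtw_le_alignCost (v := []) (v' := []) hu hb haA (by omega)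
    hu' (IsExpansion.refl []) (by simpa using hlen)

theorem dtw_replicate_append_replicate_append {a b : ℕ} {c d : ℝ} {u v : List ℝ}
    (hu : u.head? = some d) (hv : v.head? = some c) (ha : 0 < a) (hb : 0 < b) :
    dtw (replicate a c ++ u) (replicate b d ++ v) =
      min (a * |c - d| + dtw u (replicate b d ++ v))
        (b * |c - d| + dtw (replicate a c ++ u) v) := by
  have hu₀ : u ≠ [] := by rintro rfl; simp at hu
  have hv₀ : v ≠ [] := by rintro rfl; simp at hv
  refine le_antisymm (le_min ?_ ?_)
    (le_dtw (by simp [hu₀]) (by simp [hv₀]) fun x' y' hx' hy' hlen => ?_)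
  · exact dtw_replicate_append_le hu₀ (by simp [head?_append, head?_replicate, hb.ne'])
  · rw [dtw_comm, dtw_comm _ v, abs_sub_comm]
    exact dtw_replicate_append_le hv₀ (by simp [head?_append, head?_replicate, ha.ne'])
  obtain ⟨A, haA, u', hu', rfl⟩ := hx'.exists_of_replicate_append
  obtain ⟨B, hbB, v', hv', rfl⟩ := hy'.exists_of_replicate_append
  simp only [length_append, length_replicate] at hlen
  rcases le_total A B with hAB | hBA
  · exact (min_le_left _ _).trans (add_dtw_le_alignCost hu hb haA hAB hu' hv' hlen)
  · refine (min_le_right _ _).trans ?_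
    rw [dtw_comm, abs_sub_comm, alignCost_comm]
    exact add_dtw_le_alignCost hv ha hbB hBA hv' hu' hlen.symm

theorem headD_mem {α : Type*} {l : List α} (hl : l ≠ []) (a : α) : l.headD a ∈ l := by
  obtain ⟨b, t, rfl⟩ := exists_cons_of_ne_nil hl
  exact mem_cons_self

theorem abs_sub_eq_one_of_binary {c d : ℝ} (hc : c = 0 ∨ c = 1) (hd : d = 0 ∨ d = 1)
    (hcd : c ≠ d) : |c - d| = 1 := by
  rcases hc with rfl | rfl <;> rcases hd with rfl | rfl <;> norm_num at *

theorem eq_of_binary_of_ne {z c d : ℝ} (hz : z = 0 ∨ z = 1) (hc : c = 0 ∨ c = 1)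
    (hd : d = 0 ∨ d = 1) (hzc : z ≠ c) (hdc : d ≠ c) : z = d := by
  rcases hz with rfl | rfl <;> rcases hc with rfl | rfl <;> rcases hd with rfl | rfl <;>
    norm_num at *

theorem take_firstRunLen (l : List ℝ) :
    l.take (firstRunLen l) = replicate (firstRunLen l) (l.headD 0) := by
  rw [firstRunLen, ← prefix_iff_eq_take.1 (takeWhile_prefix _)]
  exact eq_replicate_iff.2 ⟨rfl, fun b hb => by simpa using mem_takeWhile_imp hb⟩

theorem replicate_firstRunLen_append_drop (l : List ℝ) :
    replicate (firstRunLen l) (l.headD 0) ++ l.drop (firstRunLen l) = l := by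
  rw [← take_firstRunLen, take_append_drop]

theorem head?_drop_firstRunLen_ne (l : List ℝ) :
    (l.drop (firstRunLen l)).head? ≠ some (l.headD 0) := by
  have hdrop := drop_left (l₁ := l.takeWhile fun a => decide (a = l.headD 0))
    (l₂ := l.dropWhile fun a => decide (a = l.headD 0))
  rw [takeWhile_append_dropWhile] at hdrop
  have h := head?_dropWhile_not (fun a => decide (a = l.headD 0)) l
  rw [firstRunLen, hdrop]
  intro hc
  rw [hc] at h
  simp at h

theorem firstRunLen_pos {l : List ℝ} (hl : l ≠ []) : 0 < firstRunLen l := by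
  obtain ⟨b, t, rfl⟩ := exists_cons_of_ne_nil hl
  simp [firstRunLen]

theorem numRuns_eq_zero_iff {l : List ℝ} : numRuns l = 0 ↔ l = [] := by
  simp [numRuns, destutter_eq_nil]

theorem numRuns_pos_iff {l : List ℝ} : 0 < numRuns l ↔ l ≠ [] := by
  rw [Nat.pos_iff_ne_zero, Ne, numRuns_eq_zero_iff]

theorem numRuns_replicate_append {k : ℕ} {c : ℝ} {u : List ℝ} (hk : 0 < k)
    (hu : u.head? ≠ some c) : numRuns (replicate k c ++ u) = numRuns u + 1 := by
  obtain ⟨j, rfl⟩ : ∃ j, k = j + 1 := ⟨k - 1, by omega⟩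
  have hskip : ∀ j, (replicate j c ++ u).destutter' (· ≠ ·) c = u.destutter' (· ≠ ·) c := by
    intro j
    induction j with
    | zero => rfl
    | succ j ih => rw [replicate_succ, cons_append, destutter'_cons_neg _ (not_not.2 rfl), ih]
  rw [numRuns, replicate_succ, cons_append, destutter_cons', hskip]
  cases u with
  | nil => simp [numRuns]
  | cons b r =>
    rw [destutter'_cons_pos _ (Ne.symm (by simpa using hu)), numRuns, destutter_cons',
      length_cons]

theorem numRuns_eq_numRuns_drop_firstRunLen_add_one {l : List ℝ} (hl : l ≠ []) :
    numRuns l = numRuns (l.drop (firstRunLen l)) + 1 := by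
  conv_lhs => rw [← replicate_firstRunLen_append_drop l]
  exact numRuns_replicate_append (firstRunLen_pos hl) (head?_drop_firstRunLen_ne l)

theorem replicate_firstRunLen_of_numRuns_eq_one {l : List ℝ} (h : numRuns l = 1) :
    replicate (firstRunLen l) (l.headD 0) = l := by
  have hl : l ≠ [] := numRuns_pos_iff.1 (by omega)
  have hdrop : l.drop (firstRunLen l) = [] := by
    rw [← numRuns_eq_zero_iff]
    have := numRuns_eq_numRuns_drop_firstRunLen_add_one hl
    omega
  simpa [hdrop] using replicate_firstRunLen_append_drop l

theorem head?_drop_firstRunLen_of_binary {l : List ℝ} {d : ℝ}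
    (hbin : ∀ z ∈ l, z = 0 ∨ z = 1) (hd : d = 0 ∨ d = 1) (hne : l.headD 0 ≠ d)
    (h : 1 < numRuns l) : (l.drop (firstRunLen l)).head? = some d := by
  have hl : l ≠ [] := numRuns_pos_iff.1 (by omega)
  obtain ⟨z, r, hzr⟩ : ∃ z r, l.drop (firstRunLen l) = z :: r := by
    refine exists_cons_of_ne_nil fun hnil => ?_
    have := numRuns_eq_numRuns_drop_firstRunLen_add_one hl
    rw [hnil, numRuns_eq_zero_iff.2 rfl] at this
    omega
  have hz : z ∈ l := mem_of_mem_drop (hzr ▸ mem_cons_self)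
  have hzc : z ≠ l.headD 0 := by simpa [hzr] using head?_drop_firstRunLen_ne l
  rw [hzr, head?_cons,
    eq_of_binary_of_ne (hbin z hz) (hbin _ (headD_mem hl 0)) hd hzc (Ne.symm hne)]

theorem dtw_first_run_recursion_general
    (x y : List ℝ)
    (hxbin : ∀ c ∈ x, c = 0 ∨ c = 1) (hybin : ∀ c ∈ y, c = 0 ∨ c = 1)
    (hhead : x.headD 0 ≠ y.headD 0)
    (hruns : numRuns y ≤ numRuns x) :
    (numRuns x = 1 → numRuns y = 1 →
      dtw x y = max (firstRunLen x : ℝ) (firstRunLen y : ℝ)) ∧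
    (1 < numRuns x → numRuns y = 1 →
      dtw x y = (firstRunLen x : ℝ) + dtw (x.drop (firstRunLen x)) y) ∧
    (1 < numRuns y →
      dtw x y = min ((firstRunLen x : ℝ) + dtw (x.drop (firstRunLen x)) y)
        ((firstRunLen y : ℝ) + dtw x (y.drop (firstRunLen y)))) := by
  have heads : 0 < numRuns y → x ≠ [] ∧ y ≠ [] ∧
      (x.headD 0 = 0 ∨ x.headD 0 = 1) ∧ (y.headD 0 = 0 ∨ y.headD 0 = 1) := by
    intro hy
    have hx : x ≠ [] := numRuns_pos_iff.1 (by omega)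
    have hy : y ≠ [] := numRuns_pos_iff.1 hy
    exact ⟨hx, hy, hxbin _ (headD_mem hx 0), hybin _ (headD_mem hy 0)⟩
  refine ⟨fun h1x h1y => ?_, fun h2x h1y => ?_, fun h2y => ?_⟩
  · obtain ⟨hx, hy, hc, hd⟩ := heads (by omega)
    have h := dtw_replicate_replicate (x.headD 0) (y.headD 0) (firstRunLen_pos hx)
      (firstRunLen_pos hy)
    rwa [replicate_firstRunLen_of_numRuns_eq_one h1x, replicate_firstRunLen_of_numRuns_eq_one h1y,
      abs_sub_eq_one_of_binary hc hd hhead, mul_one, Nat.cast_max] at h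
  · obtain ⟨-, hy, hc, hd⟩ := heads (by omega)
    have h := dtw_replicate_append_replicate (a := firstRunLen x) (c := x.headD 0)
      (head?_drop_firstRunLen_of_binary hxbin hd hhead h2x) (firstRunLen_pos hy)
    rwa [replicate_firstRunLen_append_drop, replicate_firstRunLen_of_numRuns_eq_one h1y,
      abs_sub_eq_one_of_binary hc hd hhead, mul_one] at h
  · obtain ⟨hx, hy, hc, hd⟩ := heads (by omega)
    have h := dtw_replicate_append_replicate_append
      (head?_drop_firstRunLen_of_binary hxbin hd hhead (h2y.trans_le hruns))
      (head?_drop_firstRunLen_of_binary hybin hc (Ne.symm hhead) h2y)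
      (firstRunLen_pos hx) (firstRunLen_pos hy)
    rwa [replicate_firstRunLen_append_drop, replicate_firstRunLen_append_drop,
      abs_sub_eq_one_of_binary hc hd hhead, mul_one, mul_one] at h

/-- Let `x, y` be binary strings with `x[1] ≠ y[1]`, first-run lengths
`a = lor(x,1)` and `b = lor(y,1)`, and `m' = #runs(x) ≥ n' = #runs(y)`.  Then:
if `m' = n' = 1` then `d_DTW(x,y) = max(a,b)`;
if `m' > n' = 1` then `d_DTW(x,y) = a + d_DTW(x[a+1,m], y)`;
if `n' > 1` then `d_DTW(x,y) = min(a + d_DTW(x[a+1,m], y), b + d_DTW(x, y[b+1,n]))`. -/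
theorem dtw_first_run_recursion
    (x y : List ℝ) (hx : x ≠ []) (hy : y ≠ [])
    (hxbin : ∀ c ∈ x, c = 0 ∨ c = 1) (hybin : ∀ c ∈ y, c = 0 ∨ c = 1)
    (hhead : x.headD 0 ≠ y.headD 0)
    (hruns : numRuns y ≤ numRuns x) :
    (numRuns x = 1 → numRuns y = 1 →
      dtw x y = max (firstRunLen x : ℝ) (firstRunLen y : ℝ)) ∧
    (1 < numRuns x → numRuns y = 1 →
      dtw x y = (firstRunLen x : ℝ) + dtw (x.drop (firstRunLen x)) y) ∧
    (1 < numRuns y →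
      dtw x y = min ((firstRunLen x : ℝ) + dtw (x.drop (firstRunLen x)) y)
        ((firstRunLen y : ℝ) + dtw x (y.drop (firstRunLen y)))) :=
  dtw_first_run_recursion_general x y hxbin hybin hhead hruns
end
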